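/- arXiv:1404.3645 — 4 statements merged into one kernel-verified Lean document; each statement's English description precedes it below -/
import Mathlib

section
/- (Sewing Lemma.) Let Ξ: Δ_T → R^d be continuous and suppose there exist a constant K > 0, a control function ω, and θ > 1 such that |Ξ_{s,t} − Ξ_{s,u} − Ξ_{u,t}| ≤ K ω(s,t)^θ for all 0 ≤ s ≤ u ≤ t ≤ T. Then there exists a unique function Φ: [0,T] → R^d with Φ(0) = 0 satisfying |Φ(t) − Φ(s) − Ξ_{s,t}| ≤ C(θ) ω(s,t)^θ for all (s,t) ∈ Δ_T, where C(θ) = K(1 − 2^{1−θ})^{−1}; moreover, for every (s,t) ∈ Δ_T, the Riemann-type sums Σ_{[u,v]∈π(s,t)} Ξ_{u,v} converge to Φ(t) − Φ(s) as the mesh of the partition π(s,t) of [s,t] tends to zero. -/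
open Finset Filter Topology

/-- A partition of `[a,b]` given by finitely many monotone grid points. -/
structure GridPartition (a b : ℝ) where
  n : ℕ
  t : Fin (n + 1) → ℝ
  mono : Monotone t
  first : t 0 = a
  last : t (Fin.last n) = b

namespace GridPartition

variable {a b : ℝ}

/-- The mesh of a partition: the largest interval length. -/
noncomputable def mesh (π : GridPartition a b) : ℝ :=
  ⨆ i : Fin π.n, (π.t i.succ - π.t i.castSucc)

/-- The Riemann-type sum `∑_{[s,t] ∈ π} F s t` over the intervals of a partition. -/
def rsum {E : Type*} [AddCommMonoid E] (π : GridPartition a b) (F : ℝ → ℝ → E) : E :=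
  ∑ i : Fin π.n, F (π.t i.castSucc) (π.t i.succ)

end GridPartition

/-- `RiemannLimit a b F L`: the Riemann-type sums of `F` over partitions of `[a,b]`
converge to `L` as the mesh tends to `0`. -/
def RiemannLimit {E : Type*} [SeminormedAddCommGroup E] (a b : ℝ) (F : ℝ → ℝ → E)
    (L : E) : Prop :=
  ∀ ε > 0, ∃ δ > 0, ∀ π : GridPartition a b, π.mesh < δ → ‖π.rsum F - L‖ < ε

/-- `X` has finite `p`-variation on `[a,b]` (boundedness of the partition sums). -/
def FinitePVar {E : Type*} [SeminormedAddCommGroup E] (p a b : ℝ) (X : ℝ → E) : Prop :=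
  ∃ M : ℝ, ∀ π : GridPartition a b,
    (∑ i : Fin π.n, ‖X (π.t i.succ) - X (π.t i.castSucc)‖ ^ p) ≤ M

/-- `X ∈ 𝒱^p([a,b])`: continuous and of finite `p`-variation. -/
def MemVp {E : Type*} [SeminormedAddCommGroup E] (p a b : ℝ) (X : ℝ → E) : Prop :=
  ContinuousOn X (Set.Icc a b) ∧ FinitePVar p a b X

/-- Finite `r`-variation for a two-parameter (remainder) function. -/
def FiniteRVar2 {E : Type*} [SeminormedAddCommGroup E] (r a b : ℝ) (R : ℝ → ℝ → E) : Prop :=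
  ∃ M : ℝ, ∀ π : GridPartition a b,
    (∑ i : Fin π.n, ‖R (π.t i.castSucc) (π.t i.succ)‖ ^ r) ≤ M

/-- Euclidean inner product on `Fin d → ℝ`. -/
def dot {d : ℕ} (x y : Fin d → ℝ) : ℝ := ∑ i, x i * y i

/-- Matrix-vector multiplication. -/
def mulVec' {d : ℕ} (M : Fin d → Fin d → ℝ) (v : Fin d → ℝ) : Fin d → ℝ :=
  fun i => ∑ j, M i j * v j

/-- `Y` is controlled by `X` with Gubinelli derivative `Y'` (vector case). -/
def Controlled {d : ℕ} (q r a b : ℝ) (X Y : ℝ → Fin d → ℝ)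
    (Y' : ℝ → Fin d → Fin d → ℝ) : Prop :=
  MemVp q a b Y' ∧
    FiniteRVar2 r a b (fun s t => Y t - Y s - mulVec' (Y' s) (X t - X s))

/-- `Y` is controlled by `X` with Gubinelli derivative `Y'` (scalar case). -/
def Controlled1 (q r a b : ℝ) (X Y Y' : ℝ → ℝ) : Prop :=
  MemVp q a b Y' ∧
    FiniteRVar2 r a b (fun s t => Y t - Y s - Y' s * (X t - X s))

/-- A control function on the simplex `Δ_T`. -/
def IsControlFun (T : ℝ) (ω : ℝ → ℝ → ℝ) : Prop :=
  ContinuousOn (fun z : ℝ × ℝ => ω z.1 z.2)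
      {z : ℝ × ℝ | 0 ≤ z.1 ∧ z.1 ≤ z.2 ∧ z.2 ≤ T} ∧
    (∀ s ∈ Set.Icc (0 : ℝ) T, ω s s = 0) ∧
    (∀ s t : ℝ, 0 ≤ s → s ≤ t → t ≤ T → 0 ≤ ω s t) ∧
    (∀ s u t : ℝ, 0 ≤ s → s ≤ u → u ≤ t → t ≤ T → ω s u + ω u t ≤ ω s t)

/-- An increasing (refining) sequence of partitions with mesh tending to zero. -/
def IncreasingSeq {T : ℝ} (π : ℕ → GridPartition 0 T) : Prop :=
  (∀ n, Set.range (π n).t ⊆ Set.range (π (n + 1)).t) ∧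
    Tendsto (fun n => (π n).mesh) atTop (𝓝 0)

/-- `f` has quadratic variation `Q` along the partition sequence `π` in the sense
of Föllmer. -/
def HasQV {T : ℝ} (π : ℕ → GridPartition 0 T) (f : ℝ → ℝ) (Q : ℝ → ℝ) : Prop :=
  ContinuousOn Q (Set.Icc 0 T) ∧
    ∀ u ∈ Set.Icc (0 : ℝ) T,
      Tendsto (fun n => ∑ i : Fin (π n).n,
          (f (min ((π n).t i.succ) u) - f (min ((π n).t i.castSucc) u)) ^ 2)
        atTop (𝓝 (Q u))

/-!
We build `Φ t` as the limit of the Riemann sums of `Ξ` along the dyadic partitions of `[0, T]`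
cut off at `t`. The key estimate is a maximal inequality: along any partition of `[s, t]` the
Riemann sum of `Ξ` is within `2K (1 - 2^(1-θ))⁻¹ ω(s, t)^θ` of `Ξ s t`; to see it, cut the
partition where `ω(s, ·)` passes `ω(s, t) / 2` and induct on both halves. Applied to the blocks
of a dyadic refinement it makes the dyadic sums Cauchy, and gives
`‖Φ t - Φ s - Ξ s t‖ ≤ 2K (1 - 2^(1-θ))⁻¹ ω(s, t)^θ`. Splitting `[s, t]` at an `ω`-midpoint turns
any bound `A ω^θ` of this kind into `(K + 2^(1-θ) A) ω^θ`; iterating gives `K (1 - 2^(1-θ))⁻¹`.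

Finally, if `‖Φ t - Φ s - Ξ s t‖ ≤ A ω(s, t)^θ`, then along a partition of mesh small enough that
every `ω`-increment is below `η` the Riemann sum is within
`A ∑ ω^θ ≤ A η^(θ-1) ω(s, t)` of `Φ t - Φ s`, so `Φ t - Φ s` is the limit of the Riemann sums.
This gives the convergence of the sums, and uniqueness of `Φ`.
-/

/-- Grids are sequences `p : ℕ → ℝ`, of which only `p 0, …, p n` enter. -/
def gridSum {M : Type*} [AddCommMonoid M] (F : ℝ → ℝ → M) (p : ℕ → ℝ) (n : ℕ) : M :=
  ∑ i ∈ range n, F (p i) (p (i + 1))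

theorem Real.rpow_le_rpow_sub_one_mul {x η θ : ℝ} (hθ : 1 ≤ θ) (hx : 0 ≤ x) (hxη : x ≤ η) :
    x ^ θ ≤ η ^ (θ - 1) * x := by
  calc x ^ θ = x ^ (θ - 1) * x := by
        rw [← Real.rpow_add_one' hx (by linarith), sub_add_cancel]
    _ ≤ η ^ (θ - 1) * x := by gcongr

theorem two_rpow_one_sub_lt_one {θ : ℝ} (hθ : 1 < θ) : (2 : ℝ) ^ (1 - θ) < 1 :=
  Real.rpow_lt_one_of_one_lt_of_neg one_lt_two (by linarith)

theorem two_mul_half_rpow {x : ℝ} (hx : 0 ≤ x) (θ : ℝ) :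
    2 * (x / 2) ^ θ = 2 ^ (1 - θ) * x ^ θ := by
  rw [Real.div_rpow hx zero_le_two, Real.rpow_sub zero_lt_two, Real.rpow_one]
  ring

theorem add_mul_div_one_sub {r : ℝ} (hr : r ≠ 1) (c : ℝ) :
    c + r * (c / (1 - r)) = c / (1 - r) := by
  have : 1 - r ≠ 0 := sub_ne_zero.2 hr.symm
  field_simp
  ring

namespace IsControlFun

variable {T θ : ℝ} {ω : ℝ → ℝ → ℝ}

theorem nonneg (hω : IsControlFun T ω) {s t : ℝ} (hs : 0 ≤ s) (hst : s ≤ t) (ht : t ≤ T) :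
    0 ≤ ω s t :=
  hω.2.2.1 s t hs hst ht

theorem apply_self (hω : IsControlFun T ω) {s : ℝ} (hs : 0 ≤ s) (hsT : s ≤ T) : ω s s = 0 :=
  hω.2.1 s ⟨hs, hsT⟩

theorem add_le (hω : IsControlFun T ω) {s u t : ℝ} (hs : 0 ≤ s) (hsu : s ≤ u) (hut : u ≤ t)
    (ht : t ≤ T) : ω s u + ω u t ≤ ω s t :=
  hω.2.2.2 s u t hs hsu hut ht

theorem mono (hω : IsControlFun T ω) {s s' t' t : ℝ} (hs : 0 ≤ s) (hss' : s ≤ s') (hs't' : s' ≤ t')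
    (ht't : t' ≤ t) (ht : t ≤ T) : ω s' t' ≤ ω s t := by
  have h₁ := hω.add_le hs hss' (hs't'.trans ht't) ht
  have h₂ := hω.add_le (hs.trans hss') hs't' ht't ht
  have h₃ := hω.nonneg hs hss' ((hs't'.trans ht't).trans ht)
  have h₄ := hω.nonneg ((hs.trans hss').trans hs't') ht't ht
  linarith

/-- By the intermediate value theorem `ω s m = ω m t` for some `m`; superadditivity does the
rest. -/
theorem exists_half (hω : IsControlFun T ω) {s t : ℝ} (hs : 0 ≤ s) (hst : s ≤ t) (ht : t ≤ T) :
    ∃ m, s ≤ m ∧ m ≤ t ∧ ω s m ≤ ω s t / 2 ∧ ω m t ≤ ω s t / 2 := by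
  have hcont : ContinuousOn (fun m => ω s m - ω m t) (Set.Icc s t) := by
    refine ContinuousOn.sub (hω.1.comp (f := fun m => (s, m)) (by fun_prop) ?_)
      (hω.1.comp (f := fun m => (m, t)) (by fun_prop) ?_)
    · exact fun m hm => ⟨hs, hm.1, hm.2.trans ht⟩
    · exact fun m hm => ⟨hs.trans hm.1, hm.2, ht⟩
  have hzero : (0 : ℝ) ∈ Set.Icc (ω s s - ω s t) (ω s t - ω t t) := by
    rw [hω.apply_self hs (hst.trans ht), hω.apply_self (hs.trans hst) ht]
    have := hω.nonneg hs hst ht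
    constructor <;> linarith
  obtain ⟨m, ⟨hsm, hmt⟩, hm⟩ := intermediate_value_Icc hst hcont hzero
  have := hω.add_le hs hsm hmt ht
  exact ⟨m, hsm, hmt, by linarith, by linarith⟩

/-- Cut the grid after the last point `p j` with `ω (p a) (p j) ≤ ω (p a) (p b) / 2`. -/
theorem exists_split (hω : IsControlFun T ω) {p : ℕ → ℝ} (hp : Monotone p) {a b : ℕ} (hab : a < b)
    (ha : 0 ≤ p a) (hb : p b ≤ T) :
    ∃ j, a ≤ j ∧ j < b ∧ ω (p a) (p j) ≤ ω (p a) (p b) / 2 ∧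
      ω (p (j + 1)) (p b) ≤ ω (p a) (p b) / 2 := by
  set W := ω (p a) (p b)
  have hW : 0 ≤ W := hω.nonneg ha (hp hab.le) hb
  set P : ℕ → Prop := fun i => ω (p a) (p i) ≤ W / 2
  have hPa : P a := by
    simp only [P]
    rw [hω.apply_self ha ((hp hab.le).trans hb)]
    positivity
  set j := Nat.findGreatest P (b - 1)
  have haj : a ≤ j := Nat.le_findGreatest (by omega) hPa
  have hjb : j < b := (Nat.findGreatest_le _).trans_lt (by omega)
  refine ⟨j, haj, hjb, Nat.findGreatest_spec (by omega) hPa, ?_⟩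
  rcases (show j + 1 ≤ b from hjb).eq_or_lt with h | h
  · rw [h, hω.apply_self (ha.trans (hp hab.le)) hb]
    positivity
  · have hgt := not_le.mp <|
      Nat.findGreatest_is_greatest (P := P) (Nat.lt_succ_self j) (by omega : j + 1 ≤ b - 1)
    have := hω.add_le ha (hp (by omega : a ≤ j + 1)) (hp h.le) hb
    linarith

theorem exists_pos_forall_sub_lt (hω : IsControlFun T ω) {η : ℝ} (hη : 0 < η) :
    ∃ δ > 0, ∀ s t, 0 ≤ s → s ≤ t → t ≤ T → t - s < δ → ω s t < η := by
  set Δ : Set (ℝ × ℝ) := {z | 0 ≤ z.1 ∧ z.1 ≤ z.2 ∧ z.2 ≤ T}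
  have hΔ : IsCompact Δ := by
    refine (isCompact_Icc (a := ((0 : ℝ), (0 : ℝ))) (b := (T, T))).of_isClosed_subset ?_ ?_
    · exact (isClosed_le continuous_const continuous_fst).inter
        ((isClosed_le continuous_fst continuous_snd).inter
          (isClosed_le continuous_snd continuous_const))
    · exact fun z ⟨h₁, h₂, h₃⟩ => ⟨⟨h₁, h₁.trans h₂⟩, h₂.trans h₃, h₃⟩
  obtain ⟨δ, hδ, h⟩ :=
    Metric.uniformContinuousOn_iff.mp (hΔ.uniformContinuousOn_of_continuous hω.1) η hη
  refine ⟨δ, hδ, fun s t hs hst ht hts => ?_⟩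
  have hdist : dist (s, t) (s, s) < δ := by
    rw [Prod.dist_eq, dist_self, Real.dist_eq, abs_of_nonneg (sub_nonneg.2 hst)]
    exact max_lt hδ hts
  have := h (s, t) ⟨hs, hst, ht⟩ (s, s) ⟨hs, le_rfl, hst.trans ht⟩ hdist
  rwa [Real.dist_eq, hω.apply_self hs (hst.trans ht), sub_zero,
    abs_of_nonneg (hω.nonneg hs hst ht)] at this

variable {p : ℕ → ℝ} {n : ℕ}

theorem gridSum_le (hω : IsControlFun T ω) (hp : Monotone p) (h0 : 0 ≤ p 0) (hn : p n ≤ T) :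
    gridSum ω p n ≤ ω (p 0) (p n) := by
  induction n with
  | zero => simp [gridSum, hω.apply_self h0 hn]
  | succ n ih =>
    have h₁ := ih ((hp n.le_succ).trans hn)
    have h₂ := hω.add_le (u := p n) (t := p (n + 1)) h0 (hp n.zero_le) (hp n.le_succ) hn
    rw [gridSum] at h₁ ⊢
    rw [sum_range_succ]
    linarith

theorem gridSum_rpow_nonneg (hω : IsControlFun T ω) (hp : Monotone p) (h0 : 0 ≤ p 0)
    (hn : p n ≤ T) : 0 ≤ gridSum (fun u v => ω u v ^ θ) p n :=
  sum_nonneg fun i hi => Real.rpow_nonneg (hω.nonneg (h0.trans (hp i.zero_le)) (hp i.le_succ)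
    ((hp (mem_range.1 hi)).trans hn)) θ

theorem gridSum_rpow_le (hω : IsControlFun T ω) (hθ : 1 ≤ θ) (hp : Monotone p) (h0 : 0 ≤ p 0)
    (hn : p n ≤ T) {η : ℝ} (hη₀ : 0 ≤ η) (hη : ∀ i < n, ω (p i) (p (i + 1)) ≤ η) :
    gridSum (fun u v => ω u v ^ θ) p n ≤ η ^ (θ - 1) * ω (p 0) (p n) := by
  calc gridSum (fun u v => ω u v ^ θ) p n ≤ ∑ i ∈ range n, η ^ (θ - 1) * ω (p i) (p (i + 1)) :=
        sum_le_sum fun i hi => Real.rpow_le_rpow_sub_one_mul hθ (hω.nonneg (h0.trans (hp i.zero_le))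
          (hp i.le_succ) ((hp (mem_range.1 hi)).trans hn)) (hη i (mem_range.1 hi))
    _ = η ^ (θ - 1) * gridSum ω p n := by rw [gridSum, mul_sum]
    _ ≤ η ^ (θ - 1) * ω (p 0) (p n) := by
        gcongr
        exact hω.gridSum_le hp h0 hn

/-- Choose `η` with `η^(θ-1) ω(0, T) ≤ ε`, possible as `θ > 1`, and then the mesh so small that
every `ω`-increment is below `η`. -/
theorem exists_forall_gridSum_rpow_le (hω : IsControlFun T ω) (hθ : 1 < θ) {ε : ℝ} (hε : 0 < ε) :
    ∃ δ > 0, ∀ (p : ℕ → ℝ) (n : ℕ), Monotone p → 0 ≤ p 0 → p n ≤ T →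
      (∀ i < n, p (i + 1) - p i < δ) → gridSum (fun u v => ω u v ^ θ) p n ≤ ε := by
  have hlim : Tendsto (fun η : ℝ => η ^ (θ - 1) * ω 0 T) (𝓝[>] 0) (𝓝 0) := by
    have := (Real.continuousAt_rpow_const 0 (θ - 1) (Or.inr (by linarith))).tendsto.mul_const
      (ω 0 T)
    rw [Real.zero_rpow (by linarith), zero_mul] at this
    exact this.mono_left nhdsWithin_le_nhds
  obtain ⟨η, hηε, hη⟩ := ((hlim.eventually (ge_mem_nhds hε)).and self_mem_nhdsWithin).exists
  obtain ⟨δ, hδ, hω_lt⟩ := hω.exists_pos_forall_sub_lt hη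
  refine ⟨δ, hδ, fun p n hp h0 hn hmesh => ?_⟩
  calc gridSum (fun u v => ω u v ^ θ) p n ≤ η ^ (θ - 1) * ω (p 0) (p n) :=
        hω.gridSum_rpow_le hθ.le hp h0 hn (le_of_lt hη) fun i hi =>
          (hω_lt _ _ (h0.trans (hp i.zero_le)) (hp i.le_succ) ((hp hi).trans hn) (hmesh i hi)).le
    _ ≤ η ^ (θ - 1) * ω 0 T := by
        gcongr
        exact hω.mono le_rfl h0 (hp n.zero_le) hn le_rfl
    _ ≤ ε := hηε

end IsControlFun

namespace GridPartition

variable {a b : ℝ}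

def seq (π : GridPartition a b) (i : ℕ) : ℝ :=
  π.t ⟨min i π.n, Nat.lt_succ_of_le (min_le_right _ _)⟩

theorem seq_monotone (π : GridPartition a b) : Monotone π.seq := fun _ _ hij =>
  π.mono (Fin.mk_le_mk.mpr (min_le_min hij le_rfl))

theorem seq_zero (π : GridPartition a b) : π.seq 0 = a :=
  (congr_arg π.t (Fin.ext (by simp))).trans π.first

theorem seq_n (π : GridPartition a b) : π.seq π.n = b :=
  (congr_arg π.t (Fin.ext (by simp))).trans π.last

theorem rsum_eq_gridSum {E : Type*} [AddCommMonoid E] (π : GridPartition a b) (F : ℝ → ℝ → E) :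
    π.rsum F = gridSum F π.seq π.n := by
  rw [rsum, gridSum, ← Fin.sum_univ_eq_sum_range (fun i => F (π.seq i) (π.seq (i + 1)))]
  refine sum_congr rfl fun i _ => ?_
  simp only [seq]
  congr 2 <;> exact Fin.ext (by simp)

theorem seq_succ_sub_le_mesh (π : GridPartition a b) {i : ℕ} (hi : i < π.n) :
    π.seq (i + 1) - π.seq i ≤ π.mesh := by
  have e₁ : π.seq (i + 1) = π.t (Fin.succ ⟨i, hi⟩) := congr_arg π.t (Fin.ext (by simp; omega))
  have e₂ : π.seq i = π.t (Fin.castSucc ⟨i, hi⟩) := congr_arg π.t (Fin.ext (by simp; omega))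
  rw [e₁, e₂]
  exact le_ciSup (f := fun j : Fin π.n => π.t j.succ - π.t j.castSucc)
    (Set.finite_range _).bddAbove ⟨i, hi⟩

noncomputable def uniform (hab : a ≤ b) (n : ℕ) : GridPartition a b where
  n := n + 1
  t i := a + (b - a) * i / (n + 1)
  mono i j hij := by
    have : (i : ℝ) ≤ j := by exact_mod_cast hij
    dsimp only
    gcongr
  first := by simp
  last := by
    simp only [Fin.val_last]
    push_cast
    field_simp
    ring

theorem mesh_uniform_le (hab : a ≤ b) (n : ℕ) : (uniform hab n).mesh ≤ (b - a) / (n + 1) := by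
  refine Real.iSup_le (fun i => le_of_eq ?_) (div_nonneg (by linarith) (by positivity))
  show a + (b - a) * ((i.succ : ℕ) : ℝ) / (n + 1) - (a + (b - a) * ((i.castSucc : ℕ) : ℝ) / (n + 1))
    = (b - a) / (n + 1)
  rw [Fin.val_succ, Fin.val_castSucc]
  push_cast
  ring

end GridPartition

theorem RiemannLimit.unique {E : Type*} [NormedAddCommGroup E] {a b : ℝ} {F : ℝ → ℝ → E}
    {L L' : E} (hab : a ≤ b) (h : RiemannLimit a b F L) (h' : RiemannLimit a b F L') : L = L' := by
  refine eq_of_forall_dist_le fun ε hε => ?_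
  obtain ⟨δ, hδ, hL⟩ := h (ε / 2) (half_pos hε)
  obtain ⟨δ', hδ', hL'⟩ := h' (ε / 2) (half_pos hε)
  obtain ⟨n, hn⟩ := exists_nat_gt ((b - a) / min δ δ')
  have hm : 0 < min δ δ' := lt_min hδ hδ'
  have hmesh : (GridPartition.uniform hab n).mesh < min δ δ' := by
    refine (GridPartition.mesh_uniform_le hab n).trans_lt ?_
    rw [div_lt_iff₀ (by positivity)]
    rw [div_lt_iff₀ hm] at hn
    nlinarith
  set π := GridPartition.uniform hab n
  calc dist L L' = ‖(π.rsum F - L') - (π.rsum F - L)‖ := by rw [dist_eq_norm]; congr 1; abel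
    _ ≤ ‖π.rsum F - L'‖ + ‖π.rsum F - L‖ := norm_sub_le _ _
    _ ≤ ε / 2 + ε / 2 := add_le_add (hL' π (hmesh.trans_le (min_le_right _ _))).le
        (hL π (hmesh.trans_le (min_le_left _ _))).le
    _ = ε := add_halves ε

theorem IsControlFun.riemannLimit_sub {E : Type*} [SeminormedAddCommGroup E] {T θ A : ℝ}
    {ω : ℝ → ℝ → ℝ} {Ξ : ℝ → ℝ → E} {Φ : ℝ → E} (hω : IsControlFun T ω) (hθ : 1 < θ) (hA : 0 ≤ A)
    (hΦ : ∀ s t, 0 ≤ s → s ≤ t → t ≤ T → ‖Φ t - Φ s - Ξ s t‖ ≤ A * ω s t ^ θ)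
    {s t : ℝ} (hs : 0 ≤ s) (ht : t ≤ T) : RiemannLimit s t Ξ (Φ t - Φ s) := by
  intro ε hε
  obtain ⟨δ, hδ, hsmall⟩ := hω.exists_forall_gridSum_rpow_le hθ (ε := ε / (A + 1)) (by positivity)
  refine ⟨δ, hδ, fun π hπ => ?_⟩
  have h0 : 0 ≤ π.seq 0 := by rwa [π.seq_zero]
  have hn : π.seq π.n ≤ T := by rwa [π.seq_n]
  have hV := hsmall π.seq π.n π.seq_monotone h0 hn fun i hi =>
    (π.seq_succ_sub_le_mesh hi).trans_lt hπ
  have htel : Φ t - Φ s = ∑ i ∈ range π.n, (Φ (π.seq (i + 1)) - Φ (π.seq i)) := by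
    rw [sum_range_sub (fun i => Φ (π.seq i)), π.seq_zero, π.seq_n]
  calc ‖π.rsum Ξ - (Φ t - Φ s)‖
      = ‖∑ i ∈ range π.n, (Φ (π.seq (i + 1)) - Φ (π.seq i) - Ξ (π.seq i) (π.seq (i + 1)))‖ := by
        rw [π.rsum_eq_gridSum, gridSum, htel, ← norm_neg, ← sum_sub_distrib, ← sum_neg_distrib]
        congr 1; refine sum_congr rfl fun i _ => ?_; abel
    _ ≤ A * gridSum (fun u v => ω u v ^ θ) π.seq π.n := by
        rw [gridSum, mul_sum]
        refine (norm_sum_le _ _).trans (sum_le_sum fun i hi => hΦ _ _ (h0.trans (π.seq_monotone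
          i.zero_le)) (π.seq_monotone i.le_succ) ((π.seq_monotone (mem_range.1 hi)).trans hn))
    _ ≤ A * (ε / (A + 1)) := by gcongr
    _ < ε := by
        rw [mul_div_assoc', div_lt_iff₀ (by positivity)]
        nlinarith

def DefectBound {E : Type*} [SeminormedAddCommGroup E] (T K θ : ℝ) (ω : ℝ → ℝ → ℝ)
    (Ξ : ℝ → ℝ → E) : Prop :=
  ∀ s u t : ℝ, 0 ≤ s → s ≤ u → u ≤ t → t ≤ T → ‖Ξ s t - Ξ s u - Ξ u t‖ ≤ K * ω s t ^ θ

namespace DefectBound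

variable {E : Type*} [NormedAddCommGroup E] {T K θ : ℝ} {ω : ℝ → ℝ → ℝ} {Ξ : ℝ → ℝ → E}

theorem apply_self (hΞ : DefectBound T K θ ω Ξ) (hω : IsControlFun T ω) (hθ : 0 < θ) {s : ℝ}
    (hs : 0 ≤ s) (hsT : s ≤ T) : Ξ s s = 0 := by
  have h := hΞ s s s hs le_rfl le_rfl hsT
  rw [hω.apply_self hs hsT, Real.zero_rpow hθ.ne', mul_zero, sub_self, zero_sub, norm_neg] at h
  exact norm_le_zero_iff.mp h

theorem norm_sum_Ico_sub_le (hΞ : DefectBound T K θ ω Ξ) (hω : IsControlFun T ω) (hK : 0 ≤ K)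
    (hθ : 1 < θ) {p : ℕ → ℝ} (hp : Monotone p) {a b : ℕ} (hab : a ≤ b) (ha : 0 ≤ p a)
    (hb : p b ≤ T) :
    ‖∑ i ∈ Ico a b, Ξ (p i) (p (i + 1)) - Ξ (p a) (p b)‖ ≤
      2 * K / (1 - 2 ^ (1 - θ)) * ω (p a) (p b) ^ θ := by
  set C := 2 * K / (1 - 2 ^ (1 - θ))
  have hr := two_rpow_one_sub_lt_one hθ
  have hC : 0 ≤ C := div_nonneg (by linarith) (by linarith)
  induction hn : b - a using Nat.strong_induction_on generalizing a b with
  | _ n ih =>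
  rcases hab.eq_or_lt with rfl | hlt
  · rw [Ico_self, sum_empty, hΞ.apply_self hω (by linarith) ha hb, sub_zero, norm_zero]
    exact mul_nonneg hC (Real.rpow_nonneg (hω.nonneg ha le_rfl hb) θ)
  set W := ω (p a) (p b)
  have hW : 0 ≤ W := hω.nonneg ha (hp hab) hb
  obtain ⟨j, haj, hjb, hj, hj'⟩ := hω.exists_split hp hlt ha hb
  have hpj : 0 ≤ p j := ha.trans (hp haj)
  have hpj' : 0 ≤ p (j + 1) := hpj.trans (hp j.le_succ)
  have hsplit : ∑ i ∈ Ico a b, Ξ (p i) (p (i + 1)) = ∑ i ∈ Ico a j, Ξ (p i) (p (i + 1)) +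
      Ξ (p j) (p (j + 1)) + ∑ i ∈ Ico (j + 1) b, Ξ (p i) (p (i + 1)) := by
    rw [← sum_Ico_consecutive _ haj hjb.le, sum_eq_sum_Ico_succ_bot hjb, add_assoc]
  have h₁ := ih (j - a) (by omega) haj ha ((hp hjb.le).trans hb) rfl
  have h₂ := ih (b - (j + 1)) (by omega) hjb hpj' hb rfl
  have h₃ := hΞ (p a) (p j) (p b) ha (hp haj) (hp hjb.le) hb
  have h₄ := hΞ (p j) (p (j + 1)) (p b) hpj (hp j.le_succ) (hp hjb) hb
  have hω₁ : ω (p a) (p j) ^ θ ≤ (W / 2) ^ θ :=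
    Real.rpow_le_rpow (hω.nonneg ha (hp haj) ((hp hjb.le).trans hb)) hj (by linarith)
  have hω₂ : ω (p (j + 1)) (p b) ^ θ ≤ (W / 2) ^ θ :=
    Real.rpow_le_rpow (hω.nonneg hpj' (hp hjb) hb) hj' (by linarith)
  have hω₃ : ω (p j) (p b) ^ θ ≤ W ^ θ :=
    Real.rpow_le_rpow (hω.nonneg hpj (hp hjb.le) hb) (hω.mono ha (hp haj) (hp hjb.le) le_rfl hb)
      (by linarith)
  calc ‖∑ i ∈ Ico a b, Ξ (p i) (p (i + 1)) - Ξ (p a) (p b)‖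
      = ‖(∑ i ∈ Ico a j, Ξ (p i) (p (i + 1)) - Ξ (p a) (p j))
          + (∑ i ∈ Ico (j + 1) b, Ξ (p i) (p (i + 1)) - Ξ (p (j + 1)) (p b))
          - (Ξ (p a) (p b) - Ξ (p a) (p j) - Ξ (p j) (p b))
          - (Ξ (p j) (p b) - Ξ (p j) (p (j + 1)) - Ξ (p (j + 1)) (p b))‖ := by
        rw [hsplit]; congr 1; abel
    _ ≤ C * (W / 2) ^ θ + C * (W / 2) ^ θ + K * W ^ θ + K * W ^ θ := by
        refine (norm_sub_le _ _).trans (add_le_add ((norm_sub_le _ _).trans (add_le_add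
          ((norm_add_le _ _).trans (add_le_add ?_ ?_)) h₃)) (h₄.trans ?_))
        · exact h₁.trans (by gcongr)
        · exact h₂.trans (by gcongr)
        · gcongr
    _ = (2 * K + 2 ^ (1 - θ) * C) * W ^ θ := by
        linear_combination C * two_mul_half_rpow hW θ
    _ = C * W ^ θ := by rw [add_mul_div_one_sub hr.ne]

theorem norm_gridSum_sub_le (hΞ : DefectBound T K θ ω Ξ) (hω : IsControlFun T ω) (hK : 0 ≤ K)
    (hθ : 1 < θ) {p : ℕ → ℝ} (hp : Monotone p) {n : ℕ} (h0 : 0 ≤ p 0) (hn : p n ≤ T) :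
    ‖gridSum Ξ p n - Ξ (p 0) (p n)‖ ≤ 2 * K / (1 - 2 ^ (1 - θ)) * ω (p 0) (p n) ^ θ := by
  rw [gridSum, range_eq_Ico]
  exact hΞ.norm_sum_Ico_sub_le hω hK hθ hp n.zero_le h0 hn

theorem norm_gridSum_mul_sub_le (hΞ : DefectBound T K θ ω Ξ) (hω : IsControlFun T ω)
    (hK : 0 ≤ K) (hθ : 1 < θ) {p : ℕ → ℝ} (hp : Monotone p) (h0 : 0 ≤ p 0) (M N : ℕ)
    (hT : p (N * M) ≤ T) :
    ‖gridSum Ξ p (N * M) - gridSum Ξ (fun k => p (k * M)) N‖ ≤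
      2 * K / (1 - 2 ^ (1 - θ)) * gridSum (fun u v => ω u v ^ θ) (fun k => p (k * M)) N := by
  induction N with
  | zero => simp [gridSum]
  | succ N ih =>
    have hle : N * M ≤ (N + 1) * M := Nat.mul_le_mul_right M N.le_succ
    have hblock := hΞ.norm_sum_Ico_sub_le hω hK hθ hp hle (h0.trans (hp (N * M).zero_le)) hT
    rw [gridSum, ← sum_range_add_sum_Ico _ hle, ← gridSum]
    simp only [gridSum, sum_range_succ] at ih ⊢
    calc _ = ‖(∑ i ∈ range (N * M), Ξ (p i) (p (i + 1)) -
            ∑ k ∈ range N, Ξ (p (k * M)) (p ((k + 1) * M))) +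
          (∑ i ∈ Ico (N * M) ((N + 1) * M), Ξ (p i) (p (i + 1)) -
            Ξ (p (N * M)) (p ((N + 1) * M)))‖ := by
          congr 1; abel
      _ ≤ _ := by
          rw [mul_add]
          exact (norm_add_le _ _).trans (add_le_add (ih ((hp hle).trans hT)) hblock)

/-- `max r (min x t)` is the projection of `x` onto `[r, t]`. Restricting a step `[x, y]` to
`[r, t]`, versus to `[r, s]` and to `[s, t]`, only differs when the step straddles `s`, and
then by a single defect. -/
theorem norm_sub_sub_clamp_le (hΞ : DefectBound T K θ ω Ξ) (hω : IsControlFun T ω) (hK : 0 ≤ K)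
    (hθ : 0 < θ) {r s t x y : ℝ} (hr : 0 ≤ r) (hrs : r ≤ s) (hst : s ≤ t) (ht : t ≤ T)
    (hxy : x ≤ y) :
    ‖Ξ (max r (min x t)) (max r (min y t)) - Ξ (max r (min x s)) (max r (min y s)) -
      Ξ (max s (min x t)) (max s (min y t))‖ ≤ K * ω (max r (min x t)) (max r (min y t)) ^ θ := by
  have hΞs : Ξ s s = 0 := hΞ.apply_self hω hθ (hr.trans hrs) (hst.trans ht)
  have hnonneg : 0 ≤ K * ω (max r (min x t)) (max r (min y t)) ^ θ :=
    mul_nonneg hK <| Real.rpow_nonneg (hω.nonneg (hr.trans (le_max_left _ _))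
      (max_le_max le_rfl (min_le_min hxy le_rfl))
      ((max_le (hrs.trans hst) (min_le_right _ _)).trans ht)) θ
  rcases le_or_gt y s with hys | hsy
  · have hzero : Ξ (max r (min x t)) (max r (min y t)) - Ξ (max r (min x s)) (max r (min y s)) -
        Ξ (max s (min x t)) (max s (min y t)) = 0 := by
      rw [min_eq_left (hxy.trans (hys.trans hst)), min_eq_left (hxy.trans hys),
        min_eq_left (hys.trans hst), min_eq_left hys, max_eq_left (hxy.trans hys),
        max_eq_left hys, hΞs, sub_self, sub_zero]
    rw [hzero, norm_zero]
    exact hnonneg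
  rcases le_or_gt s x with hsx | hxs
  · have hzero : Ξ (max r (min x t)) (max r (min y t)) - Ξ (max r (min x s)) (max r (min y s)) -
        Ξ (max s (min x t)) (max s (min y t)) = 0 := by
      rw [min_eq_right hsx, min_eq_right (hsx.trans hxy), max_eq_right hrs,
        max_eq_right (le_min hsx hst), max_eq_right (le_min (hsx.trans hxy) hst),
        max_eq_right (le_min (hrs.trans hsx) (hrs.trans hst)),
        max_eq_right (le_min (hrs.trans (hsx.trans hxy)) (hrs.trans hst)), hΞs, sub_zero, sub_self]
    rw [hzero, norm_zero]
    exact hnonneg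
  · rw [min_eq_left (hxs.le.trans hst), min_eq_left hxs.le, min_eq_right hsy.le, max_eq_right hrs,
      max_eq_left hxs.le, max_eq_right (le_min hsy.le hst),
      max_eq_right (le_min (hrs.trans hsy.le) (hrs.trans hst))]
    exact hΞ _ _ _ (hr.trans (le_max_left _ _)) (max_le hrs hxs.le) (le_min hsy.le hst)
      ((min_le_right _ _).trans ht)

theorem norm_sub_sub_le_add_two_rpow_mul (hΞ : DefectBound T K θ ω Ξ) (hω : IsControlFun T ω)
    (hθ : 0 ≤ θ) {Φ : ℝ → E} {A : ℝ} (hA : 0 ≤ A)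
    (hΦ : ∀ s t, 0 ≤ s → s ≤ t → t ≤ T → ‖Φ t - Φ s - Ξ s t‖ ≤ A * ω s t ^ θ)
    {s t : ℝ} (hs : 0 ≤ s) (hst : s ≤ t) (ht : t ≤ T) :
    ‖Φ t - Φ s - Ξ s t‖ ≤ (K + 2 ^ (1 - θ) * A) * ω s t ^ θ := by
  obtain ⟨m, hsm, hmt, h₁, h₂⟩ := hω.exists_half hs hst ht
  calc ‖Φ t - Φ s - Ξ s t‖
      = ‖(Φ m - Φ s - Ξ s m) + (Φ t - Φ m - Ξ m t) - (Ξ s t - Ξ s m - Ξ m t)‖ := by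
        congr 1; abel
    _ ≤ A * ω s m ^ θ + A * ω m t ^ θ + K * ω s t ^ θ :=
        (norm_sub_le _ _).trans (add_le_add ((norm_add_le _ _).trans (add_le_add
          (hΦ s m hs hsm (hmt.trans ht)) (hΦ m t (hs.trans hsm) hmt ht))) (hΞ s m t hs hsm hmt ht))
    _ ≤ A * (ω s t / 2) ^ θ + A * (ω s t / 2) ^ θ + K * ω s t ^ θ := by
        have := hω.nonneg hs hsm (hmt.trans ht)
        have := hω.nonneg (hs.trans hsm) hmt ht
        gcongr
    _ = (K + 2 ^ (1 - θ) * A) * ω s t ^ θ := by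
        linear_combination A * two_mul_half_rpow (hω.nonneg hs hst ht) θ

/-- Iterate `A ↦ K + 2^(1-θ) A`, which converges to its fixed point `K (1 - 2^(1-θ))⁻¹`. -/
theorem norm_sub_sub_le_mul_inv (hΞ : DefectBound T K θ ω Ξ) (hω : IsControlFun T ω) (hK : 0 ≤ K)
    (hθ : 1 < θ) {Φ : ℝ → E} {A : ℝ} (hA : K * (1 - 2 ^ (1 - θ))⁻¹ ≤ A)
    (hΦ : ∀ s t, 0 ≤ s → s ≤ t → t ≤ T → ‖Φ t - Φ s - Ξ s t‖ ≤ A * ω s t ^ θ)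
    {s t : ℝ} (hs : 0 ≤ s) (hst : s ≤ t) (ht : t ≤ T) :
    ‖Φ t - Φ s - Ξ s t‖ ≤ K * (1 - 2 ^ (1 - θ))⁻¹ * ω s t ^ θ := by
  set r : ℝ := 2 ^ (1 - θ)
  set C := K * (1 - r)⁻¹
  have hr : r < 1 := two_rpow_one_sub_lt_one hθ
  have hr0 : 0 ≤ r := by positivity
  have hC : 0 ≤ C := mul_nonneg hK (inv_nonneg.2 (by linarith))
  have hfix : K + r * C = C := by simpa only [div_eq_mul_inv] using add_mul_div_one_sub hr.ne K
  have hiter : ∀ k : ℕ, ∀ s t, 0 ≤ s → s ≤ t → t ≤ T →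
      ‖Φ t - Φ s - Ξ s t‖ ≤ (C + r ^ k * (A - C)) * ω s t ^ θ := by
    intro k
    induction k with
    | zero => simpa using hΦ
    | succ k ih =>
      intro s t hs hst ht
      have hAk : 0 ≤ C + r ^ k * (A - C) := by nlinarith [pow_nonneg hr0 k]
      convert hΞ.norm_sub_sub_le_add_two_rpow_mul hω (by linarith) hAk ih hs hst ht using 2
      rw [pow_succ]
      linear_combination -hfix
  have hlim : Tendsto (fun k => (C + r ^ k * (A - C)) * ω s t ^ θ) atTop (𝓝 (C * ω s t ^ θ)) := by
    simpa using (((tendsto_pow_atTop_nhds_zero_of_lt_one hr0 hr).mul_const (A - C)).const_add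
      C).mul_const (ω s t ^ θ)
  exact ge_of_tendsto' hlim fun k => hiter k s t hs hst ht

end DefectBound

noncomputable def dyadicGrid (T s t : ℝ) (n k : ℕ) : ℝ := max s (min (T * k / 2 ^ n) t)

section dyadicGrid

variable {T s t : ℝ} {n : ℕ}

theorem dyadicGrid_monotone (hT : 0 ≤ T) : Monotone (dyadicGrid T s t n) := fun k l hkl =>
  max_le_max le_rfl (min_le_min (by gcongr) le_rfl)

theorem dyadicGrid_zero (hs : 0 ≤ s) : dyadicGrid T s t n 0 = s := by
  simp only [dyadicGrid, CharP.cast_eq_zero, mul_zero, zero_div]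
  exact max_eq_left ((min_le_left _ _).trans hs)

theorem dyadicGrid_two_pow (hst : s ≤ t) (ht : t ≤ T) : dyadicGrid T s t n (2 ^ n) = t := by
  simp only [dyadicGrid, Nat.cast_pow, Nat.cast_ofNat]
  rw [mul_div_cancel_right₀ _ (by positivity), min_eq_right ht, max_eq_right hst]

theorem dyadicGrid_succ_sub_le (hT : 0 ≤ T) (k : ℕ) :
    dyadicGrid T s t n (k + 1) - dyadicGrid T s t n k ≤ T / 2 ^ n := by
  have h : T * ((k + 1 : ℕ) : ℝ) / 2 ^ n - T * k / 2 ^ n = T / 2 ^ n := by push_cast; ring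
  have : 0 ≤ T / 2 ^ n := by positivity
  simp only [dyadicGrid, max_def, min_def]
  split_ifs <;> linarith

theorem dyadicGrid_mul_two_pow (j k : ℕ) :
    dyadicGrid T s t (n + j) (k * 2 ^ j) = dyadicGrid T s t n k := by
  have h : T * ((k * 2 ^ j : ℕ) : ℝ) / 2 ^ (n + j) = T * k / 2 ^ n := by
    push_cast
    field_simp
    ring
  rw [dyadicGrid, dyadicGrid, h]

end dyadicGrid

theorem IsControlFun.tendsto_gridSum_rpow_dyadicGrid {T θ s t : ℝ} {ω : ℝ → ℝ → ℝ}
    (hω : IsControlFun T ω) (hθ : 1 < θ) (hs : 0 ≤ s) (hst : s ≤ t) (ht : t ≤ T) :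
    Tendsto (fun n => gridSum (fun u v => ω u v ^ θ) (dyadicGrid T s t n) (2 ^ n)) atTop (𝓝 0) := by
  have hT : 0 ≤ T := hs.trans (hst.trans ht)
  have hmesh : Tendsto (fun n : ℕ => T / 2 ^ n) atTop (𝓝 0) :=
    tendsto_const_nhds.div_atTop (tendsto_pow_atTop_atTop_of_one_lt one_lt_two)
  rw [Metric.tendsto_atTop]
  intro ε hε
  obtain ⟨δ, hδ, hsmall⟩ := hω.exists_forall_gridSum_rpow_le hθ (half_pos hε)
  obtain ⟨N, hN⟩ := eventually_atTop.1 (hmesh.eventually (gt_mem_nhds hδ))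
  refine ⟨N, fun n hn => ?_⟩
  have h0 : 0 ≤ dyadicGrid T s t n 0 := by rwa [dyadicGrid_zero hs]
  have hn' : dyadicGrid T s t n (2 ^ n) ≤ T := by rwa [dyadicGrid_two_pow hst ht]
  have hV := hsmall _ _ (dyadicGrid_monotone hT) h0 hn' fun i _ =>
    (dyadicGrid_succ_sub_le hT i).trans_lt (hN n hn)
  rw [Real.dist_eq, sub_zero,
    abs_of_nonneg (hω.gridSum_rpow_nonneg (dyadicGrid_monotone hT) h0 hn')]
  linarith

namespace DefectBound

variable {E : Type*} [NormedAddCommGroup E] {T K θ : ℝ} {ω : ℝ → ℝ → ℝ} {Ξ : ℝ → ℝ → E}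

theorem cauchySeq_gridSum_dyadicGrid (hΞ : DefectBound T K θ ω Ξ) (hω : IsControlFun T ω)
    (hK : 0 ≤ K) (hθ : 1 < θ) {t : ℝ} (ht0 : 0 ≤ t) (ht : t ≤ T) :
    CauchySeq fun n => gridSum Ξ (dyadicGrid T 0 t n) (2 ^ n) := by
  have hT : 0 ≤ T := ht0.trans ht
  refine cauchySeq_of_le_tendsto_0' (fun n => 2 * K / (1 - 2 ^ (1 - θ)) *
    gridSum (fun u v => ω u v ^ θ) (dyadicGrid T 0 t n) (2 ^ n)) (fun n m hnm => ?_) ?_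
  · obtain ⟨j, rfl⟩ := Nat.exists_eq_add_of_le hnm
    have h := hΞ.norm_gridSum_mul_sub_le hω hK hθ (p := dyadicGrid T 0 t (n + j))
      (dyadicGrid_monotone hT) (by rw [dyadicGrid_zero le_rfl]) (2 ^ j) (2 ^ n)
      (by rw [← pow_add, dyadicGrid_two_pow ht0 ht]; exact ht)
    simp only [← pow_add, dyadicGrid_mul_two_pow] at h
    rwa [dist_comm, dist_eq_norm]
  · simpa using (hω.tendsto_gridSum_rpow_dyadicGrid hθ le_rfl ht0 ht).const_mul
      (2 * K / (1 - 2 ^ (1 - θ)))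

theorem norm_gridSum_dyadicGrid_sub_sub_le (hΞ : DefectBound T K θ ω Ξ) (hω : IsControlFun T ω)
    (hK : 0 ≤ K) (hθ : 1 < θ) {s t : ℝ} (hs : 0 ≤ s) (hst : s ≤ t) (ht : t ≤ T) (n : ℕ) :
    ‖gridSum Ξ (dyadicGrid T 0 t n) (2 ^ n) - gridSum Ξ (dyadicGrid T 0 s n) (2 ^ n) - Ξ s t‖ ≤
      2 * K / (1 - 2 ^ (1 - θ)) * ω s t ^ θ +
        K * gridSum (fun u v => ω u v ^ θ) (dyadicGrid T 0 t n) (2 ^ n) := by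
  have hT : 0 ≤ T := hs.trans (hst.trans ht)
  have hsplit : gridSum Ξ (dyadicGrid T 0 t n) (2 ^ n) - gridSum Ξ (dyadicGrid T 0 s n) (2 ^ n) -
      Ξ s t = (gridSum Ξ (dyadicGrid T s t n) (2 ^ n) - Ξ s t) + ∑ i ∈ range (2 ^ n),
        (Ξ (dyadicGrid T 0 t n i) (dyadicGrid T 0 t n (i + 1)) -
          Ξ (dyadicGrid T 0 s n i) (dyadicGrid T 0 s n (i + 1)) -
          Ξ (dyadicGrid T s t n i) (dyadicGrid T s t n (i + 1))) := by
    simp only [gridSum, sum_sub_distrib]; abel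
  rw [hsplit]
  refine (norm_add_le _ _).trans (add_le_add ?_ ?_)
  · have h := hΞ.norm_gridSum_sub_le hω hK hθ (p := dyadicGrid T s t n) (dyadicGrid_monotone hT)
      (by rwa [dyadicGrid_zero hs]) (by rwa [dyadicGrid_two_pow hst ht])
    rwa [dyadicGrid_zero hs, dyadicGrid_two_pow hst ht] at h
  · rw [gridSum, mul_sum]
    refine (norm_sum_le _ _).trans (sum_le_sum fun i _ => ?_)
    exact hΞ.norm_sub_sub_clamp_le hω hK (by linarith) le_rfl hs hst ht
      (x := T * (i : ℕ) / 2 ^ n) (y := T * ((i + 1 : ℕ) : ℝ) / 2 ^ n) (by gcongr; simp)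

theorem exists_norm_sub_sub_le [CompleteSpace E] (hΞ : DefectBound T K θ ω Ξ)
    (hω : IsControlFun T ω) (hK : 0 ≤ K) (hθ : 1 < θ) (hT : 0 ≤ T) :
    ∃ Φ : ℝ → E, Φ 0 = 0 ∧ ∀ s t, 0 ≤ s → s ≤ t → t ≤ T →
      ‖Φ t - Φ s - Ξ s t‖ ≤ 2 * K / (1 - 2 ^ (1 - θ)) * ω s t ^ θ := by
  set u : ℝ → ℕ → E := fun t n => gridSum Ξ (dyadicGrid T 0 t n) (2 ^ n)
  have hu : ∀ t, 0 ≤ t → t ≤ T → Tendsto (u t) atTop (𝓝 (limUnder atTop (u t))) :=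
    fun t ht0 ht => (hΞ.cauchySeq_gridSum_dyadicGrid hω hK hθ ht0 ht).tendsto_limUnder
  refine ⟨fun t => limUnder atTop (u t), ?_, fun s t hs hst ht => ?_⟩
  · have hu0 : u 0 = fun _ => 0 := funext fun n => sum_eq_zero fun i _ => by
      simp [dyadicGrid, hΞ.apply_self hω (by linarith) le_rfl hT]
    simp only [hu0]
    exact tendsto_const_nhds.limUnder_eq
  · refine le_of_tendsto_of_tendsto' ((((hu t (hs.trans hst) ht).sub
      (hu s hs (hst.trans ht))).sub_const (Ξ s t)).norm) ?_
      (hΞ.norm_gridSum_dyadicGrid_sub_sub_le hω hK hθ hs hst ht)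
    simpa using ((hω.tendsto_gridSum_rpow_dyadicGrid hθ le_rfl (hs.trans hst) ht).const_mul
      K).const_add (2 * K / (1 - 2 ^ (1 - θ)) * ω s t ^ θ)

end DefectBound

theorem sewing_lemma_general {d : ℕ} (T K θ : ℝ) (hT : 0 < T) (hK : 0 < K) (hθ : 1 < θ)
    (Ξ : ℝ → ℝ → Fin d → ℝ)
    (ω : ℝ → ℝ → ℝ) (hω : IsControlFun T ω)
    (hbound : ∀ s u t : ℝ, 0 ≤ s → s ≤ u → u ≤ t → t ≤ T →
      ‖Ξ s t - Ξ s u - Ξ u t‖ ≤ K * ω s t ^ θ) :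
    ∃ Φ : ℝ → Fin d → ℝ,
      (Φ 0 = 0 ∧
        (∀ s t : ℝ, 0 ≤ s → s ≤ t → t ≤ T →
          ‖Φ t - Φ s - Ξ s t‖ ≤ K * (1 - 2 ^ (1 - θ))⁻¹ * ω s t ^ θ) ∧
        (∀ s t : ℝ, 0 ≤ s → s ≤ t → t ≤ T → RiemannLimit s t Ξ (Φ t - Φ s))) ∧
      ∀ Ψ : ℝ → Fin d → ℝ,
        (Ψ 0 = 0 ∧
          ∀ s t : ℝ, 0 ≤ s → s ≤ t → t ≤ T →
            ‖Ψ t - Ψ s - Ξ s t‖ ≤ K * (1 - 2 ^ (1 - θ))⁻¹ * ω s t ^ θ) →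
        ∀ t ∈ Set.Icc (0 : ℝ) T, Ψ t = Φ t := by
  have hΞ : DefectBound T K θ ω Ξ := hbound
  have hC : 0 ≤ K * (1 - 2 ^ (1 - θ))⁻¹ :=
    mul_nonneg hK.le (inv_nonneg.2 (by linarith [two_rpow_one_sub_lt_one hθ]))
  obtain ⟨Φ, hΦ0, hΦ⟩ := hΞ.exists_norm_sub_sub_le hω hK.le hθ hT.le
  have hsharp : ∀ s t : ℝ, 0 ≤ s → s ≤ t → t ≤ T →
      ‖Φ t - Φ s - Ξ s t‖ ≤ K * (1 - 2 ^ (1 - θ))⁻¹ * ω s t ^ θ := fun _ _ =>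
    hΞ.norm_sub_sub_le_mul_inv hω hK.le hθ (by rw [mul_div_assoc, div_eq_mul_inv]; linarith) hΦ
  refine ⟨Φ, ⟨hΦ0, hsharp, fun s t hs _ ht => hω.riemannLimit_sub hθ hC hsharp hs ht⟩, ?_⟩
  rintro Ψ ⟨hΨ0, hΨ⟩ t ⟨ht0, htT⟩
  simpa [hΦ0, hΨ0] using (hω.riemannLimit_sub hθ hC hΨ le_rfl htT).unique ht0
    (hω.riemannLimit_sub hθ hC hsharp le_rfl htT)

/-- Sewing Lemma. -/
theorem sewing_lemma {d : ℕ} (T K θ : ℝ) (hT : 0 < T) (hK : 0 < K) (hθ : 1 < θ)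
    (Ξ : ℝ → ℝ → Fin d → ℝ)
    (hΞcont : ContinuousOn (fun z : ℝ × ℝ => Ξ z.1 z.2)
      {z : ℝ × ℝ | 0 ≤ z.1 ∧ z.1 ≤ z.2 ∧ z.2 ≤ T})
    (ω : ℝ → ℝ → ℝ) (hω : IsControlFun T ω)
    (hbound : ∀ s u t : ℝ, 0 ≤ s → s ≤ u → u ≤ t → t ≤ T →
      ‖Ξ s t - Ξ s u - Ξ u t‖ ≤ K * ω s t ^ θ) :
    ∃ Φ : ℝ → Fin d → ℝ,
      (Φ 0 = 0 ∧
        (∀ s t : ℝ, 0 ≤ s → s ≤ t → t ≤ T →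
          ‖Φ t - Φ s - Ξ s t‖ ≤ K * (1 - 2 ^ (1 - θ))⁻¹ * ω s t ^ θ) ∧
        (∀ s t : ℝ, 0 ≤ s → s ≤ t → t ≤ T → RiemannLimit s t Ξ (Φ t - Φ s))) ∧
      ∀ Ψ : ℝ → Fin d → ℝ,
        (Ψ 0 = 0 ∧
          ∀ s t : ℝ, 0 ≤ s → s ≤ t → t ≤ T →
            ‖Ψ t - Ψ s - Ξ s t‖ ≤ K * (1 - 2 ^ (1 - θ))⁻¹ * ω s t ^ θ) →
        ∀ t ∈ Set.Icc (0 : ℝ) T, Ψ t = Φ t :=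
  sewing_lemma_general T K θ hT hK hθ Ξ ω hω hbound
end

section
/- Fix α ∈ (0,1) and X^1_t = Σ_{k=1}^∞ 2^{−αk} sin(2^k π t) on [−1,1]. Then X^1 is not β-Hölder continuous for any β > α; specifically, for t_n = 2^{−n}, the quotient |X^1_{t_n} − X^1_0| / t_n^β ≥ 2^{(β−α)n + α} tends to infinity as n → ∞. -/
/-!
At `t = 2 ^ (-n)` every term `2 ^ (-α k) sin (2 ^ k π t)` of the series is nonnegative, so the
series dominates its single term `k = n - 1`, which equals `2 ^ (-α (n - 1))` because its sine is
`sin (π / 2) = 1`. Dividing by `t ^ β = 2 ^ (-β n)` gives `2 ^ ((β - α) n + α)`, which blows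
up since `β > α`.
-/

open Real Filter Topology

noncomputable def lacunarySeries (α t : ℝ) : ℝ :=
  ∑' k : ℕ, 2 ^ (-α * (k + 1)) * sin (2 ^ (k + 1) * π * t)

lemma lacunarySeries_zero (α : ℝ) : lacunarySeries α 0 = 0 := by
  simp [lacunarySeries]

lemma two_pow_mul_pi_mul_two_rpow_neg (m n : ℕ) :
    (2 : ℝ) ^ m * π * 2 ^ (-(n : ℝ)) = π * (2 ^ m / 2 ^ n) := by
  rw [rpow_neg zero_le_two, rpow_natCast]; ring

-- For `m ≤ n` the argument lies in `[0, π]`, otherwise it is a multiple of `π`.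
lemma sin_two_pow_mul_pi_mul_two_rpow_neg_nonneg (m n : ℕ) :
    0 ≤ sin (2 ^ m * π * 2 ^ (-(n : ℝ))) := by
  rw [two_pow_mul_pi_mul_two_rpow_neg]
  rcases le_or_gt m n with hmn | hnm
  · have hle : (2 : ℝ) ^ m / 2 ^ n ≤ 1 :=
      div_le_one_of_le₀ (pow_le_pow_right₀ one_le_two hmn) (by positivity)
    exact sin_nonneg_of_nonneg_of_le_pi (by positivity) (by nlinarith [pi_pos])
  · obtain ⟨d, rfl⟩ := Nat.exists_eq_add_of_lt hnm
    have hquot : (2 : ℝ) ^ (n + d + 1) / 2 ^ n = ((2 ^ (d + 1) : ℕ) : ℝ) := by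
      rw [pow_add, pow_add]; push_cast; field_simp; ring
    rw [hquot, mul_comm, sin_nat_mul_pi]

lemma summable_two_rpow_mul_sin {α : ℝ} (hα : 0 < α) (x : ℕ → ℝ) :
    Summable fun k : ℕ => (2 : ℝ) ^ (-α * (k + 1)) * sin (x k) := by
  have hgeom : Summable fun k : ℕ => (2 : ℝ) ^ (-α * (k + 1)) := by
    have hr : (2 : ℝ) ^ (-α) < 1 := rpow_lt_one_of_one_lt_of_neg one_lt_two (by linarith)
    refine ((summable_geometric_of_lt_one (by positivity) hr).mul_left
      ((2 : ℝ) ^ (-α))).congr fun k => ?_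
    rw [← pow_succ', ← rpow_mul_natCast zero_le_two]; push_cast; rfl
  refine hgeom.of_norm_bounded fun k => ?_
  rw [norm_mul, norm_of_nonneg (by positivity)]
  exact mul_le_of_le_one_right (by positivity) (abs_sin_le_one _)

lemma two_rpow_le_lacunarySeries {α : ℝ} (hα : 0 < α) {n : ℕ} (hn : 2 ≤ n) :
    (2 : ℝ) ^ (-α * (n - 1)) ≤ lacunarySeries α (2 ^ (-(n : ℝ))) := by
  obtain ⟨m, rfl⟩ := Nat.exists_eq_add_of_le' hn
  set t : ℝ := 2 ^ (-((m + 2 : ℕ) : ℝ))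
  have hsin : sin (2 ^ (m + 1) * π * t) = 1 := by
    rw [two_pow_mul_pi_mul_two_rpow_neg, ← sin_pi_div_two, pow_succ, pow_add]
    congr 1
    field_simp
  have hnonneg (k : ℕ) : 0 ≤ (2 : ℝ) ^ (-α * (k + 1)) * sin (2 ^ (k + 1) * π * t) :=
    mul_nonneg (by positivity) (sin_two_pow_mul_pi_mul_two_rpow_neg_nonneg _ _)
  calc (2 : ℝ) ^ (-α * (((m + 2 : ℕ) : ℝ) - 1))
      = 2 ^ (-α * ((m : ℝ) + 1)) * sin (2 ^ (m + 1) * π * t) := by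
        rw [hsin, mul_one]; push_cast; ring_nf
    _ ≤ lacunarySeries α t :=
        (summable_two_rpow_mul_sin hα fun k : ℕ => 2 ^ (k + 1) * π * t).le_tsum m
          fun k _ => hnonneg k

lemma two_rpow_le_lacunarySeries_div {α β : ℝ} (hα : 0 < α) {n : ℕ} (hn : 2 ≤ n) :
    (2 : ℝ) ^ ((β - α) * n + α) ≤
      lacunarySeries α (2 ^ (-(n : ℝ))) / (2 ^ (-(n : ℝ))) ^ β := by
  rw [← rpow_mul zero_le_two, show (β - α) * n + α = -α * (n - 1) - -n * β by ring,
    rpow_sub two_pos]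
  gcongr
  exact two_rpow_le_lacunarySeries hα hn

lemma tendsto_two_rpow_mul_add_atTop {c : ℝ} (hc : 0 < c) (d : ℝ) :
    Tendsto (fun n : ℕ => (2 : ℝ) ^ (c * n + d)) atTop atTop :=
  (tendsto_rpow_atTop_of_base_gt_one 2 one_lt_two).comp <|
    tendsto_atTop_add_const_right _ d <|
      tendsto_natCast_atTop_atTop.const_mul_atTop hc

/-- the lacunary series `X¹` is not `β`-Hölder at `0` for `β > α`:
along `t_n = 2^{-n}` the Hölder quotient is at least `2^{(β-α)n+α}` and blows up. -/
theorem lacunary_series_not_holder (α β : ℝ) (hα : α ∈ Set.Ioo (0 : ℝ) 1) (hβ : α < β)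
    (X1 : ℝ → ℝ)
    (hX1 : ∀ t : ℝ, X1 t = ∑' k : ℕ, 2 ^ (-α * (k + 1)) * Real.sin (2 ^ (k + 1) * π * t)) :
    (∀ n : ℕ, 2 ≤ n →
      (2 : ℝ) ^ ((β - α) * n + α) ≤
        |X1 (2 ^ (-(n : ℝ))) - X1 0| / ((2 : ℝ) ^ (-(n : ℝ))) ^ β) ∧
    Tendsto (fun n : ℕ => |X1 (2 ^ (-(n : ℝ))) - X1 0| / ((2 : ℝ) ^ (-(n : ℝ))) ^ β)
      atTop atTop := by
  obtain rfl : X1 = lacunarySeries α := funext hX1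
  have hbound : ∀ n : ℕ, 2 ≤ n → (2 : ℝ) ^ ((β - α) * n + α) ≤
      |lacunarySeries α (2 ^ (-(n : ℝ))) - lacunarySeries α 0| /
        ((2 : ℝ) ^ (-(n : ℝ))) ^ β := by
    intro n hn
    rw [lacunarySeries_zero, sub_zero]
    exact (two_rpow_le_lacunarySeries_div hα.1 hn).trans <|
      div_le_div_of_nonneg_right (le_abs_self _) (by positivity)
  exact ⟨hbound, tendsto_atTop_mono' atTop (eventually_atTop.2 ⟨2, hbound⟩)
    (tendsto_two_rpow_mul_add_atTop (sub_pos.2 hβ) α)⟩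
end

section
/- Fix α ∈ (0,1) and m ∈ N, and let X^{1,m}_t = Σ_{k=1}^m 2^{−αk} sin(2^k π t), X^{2,m}_t = Σ_{k=1}^m 2^{−αk} cos(2^k π t) on [−1,1]. Then the Lévy area of (X^{1,m}, X^{2,m}), namely ∫_{−1}^1 X^{1,m}_s d X^{2,m}_s − ∫_{−1}^1 X^{2,m}_s d X^{1,m}_s (classical Riemann–Stieltjes integrals of smooth functions), equals −2π Σ_{k=1}^m 2^{(1−2α)k}. In particular, for α ≤ 1/2 this quantity diverges to −∞ as m → ∞. -/
/-!
`X¹` and `X²` are a sine and a cosine series over the frequencies `2ᵏπ`; differentiating term by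
term, `X²'` is minus, and `X¹'` plus, the sine resp. cosine series with coefficients `cₖ 2ᵏπ`.
The functions `sin (nπt)`, `n ≥ 1`, are orthonormal in `L²[-1, 1]`, and so are the `cos (nπt)`, so
both integrals collapse to their diagonal and contribute `∓ π ∑ cₖ² 2ᵏ` each. With `cₖ = 2^{-αk}`
every term of the resulting sum is at least `1` when `α ≤ 1/2`.
-/

open Real Filter Topology Finset

theorem integral_cos_int_mul_pi (n : ℤ) :
    ∫ t in (-1 : ℝ)..1, cos (n * π * t) = if n = 0 then 2 else 0 := by
  split_ifs with hn
  · norm_num [hn]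
  · have hnπ : (n : ℝ) * π ≠ 0 := by positivity
    rw [intervalIntegral.integral_comp_mul_left (fun t => cos t) hnπ, integral_cos,
      mul_neg_one, sin_neg, mul_one, sin_int_mul_pi]
    simp

theorem intervalIntegrable_cos_mul (ω a b : ℝ) :
    IntervalIntegrable (fun t => cos (ω * t)) MeasureTheory.volume a b :=
  (continuous_cos.comp (continuous_const_mul ω)).intervalIntegrable a b

/-- The two cosines into which `2 sin x sin y` and `2 cos x cos y` split, at `x = aπt`, `y = bπt`. -/
theorem integral_cos_sub_nat_add_nat_mul_pi {a b : ℕ} (hab : a + b ≠ 0) :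
    (∫ t in (-1 : ℝ)..1, cos (((a - b : ℤ) : ℝ) * π * t)) = (if a = b then 2 else 0) ∧
    (∫ t in (-1 : ℝ)..1, cos (((a + b : ℤ) : ℝ) * π * t)) = 0 := by
  rw [integral_cos_int_mul_pi, integral_cos_int_mul_pi, if_neg (show (a + b : ℤ) ≠ 0 by omega)]
  simp only [sub_eq_zero, Nat.cast_inj, and_true]

theorem integral_sin_mul_sin_nat_mul_pi {a b : ℕ} (hab : a + b ≠ 0) :
    ∫ t in (-1 : ℝ)..1, sin (a * π * t) * sin (b * π * t) = if a = b then 1 else 0 := by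
  have h : ∀ t : ℝ, sin (a * π * t) * sin (b * π * t) =
      (cos (((a - b : ℤ) : ℝ) * π * t) - cos (((a + b : ℤ) : ℝ) * π * t)) / 2 := fun t => by
    push_cast
    rw [sub_mul, sub_mul, add_mul, add_mul, ← two_mul_sin_mul_sin]
    ring
  obtain ⟨h_sub, h_add⟩ := integral_cos_sub_nat_add_nat_mul_pi hab
  simp_rw [h]
  rw [intervalIntegral.integral_div, intervalIntegral.integral_sub (intervalIntegrable_cos_mul _ _ _)
    (intervalIntegrable_cos_mul _ _ _), h_sub, h_add]
  split_ifs <;> norm_num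

theorem integral_cos_mul_cos_nat_mul_pi {a b : ℕ} (hab : a + b ≠ 0) :
    ∫ t in (-1 : ℝ)..1, cos (a * π * t) * cos (b * π * t) = if a = b then 1 else 0 := by
  have h : ∀ t : ℝ, cos (a * π * t) * cos (b * π * t) =
      (cos (((a - b : ℤ) : ℝ) * π * t) + cos (((a + b : ℤ) : ℝ) * π * t)) / 2 := fun t => by
    push_cast
    rw [sub_mul, sub_mul, add_mul, add_mul, ← two_mul_cos_mul_cos]
    ring
  obtain ⟨h_sub, h_add⟩ := integral_cos_sub_nat_add_nat_mul_pi hab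
  simp_rw [h]
  rw [intervalIntegral.integral_div, intervalIntegral.integral_add (intervalIntegrable_cos_mul _ _ _)
    (intervalIntegrable_cos_mul _ _ _), h_sub, h_add]
  split_ifs <;> norm_num

theorem integral_sum_mul_sum_of_orthonormal {ι : Type*} [DecidableEq ι] (s : Finset ι)
    {f : ι → ℝ → ℝ} {a b : ℝ} (hf : ∀ i, Continuous (f i))
    (horth : ∀ i ∈ s, ∀ j ∈ s, ∫ x in a..b, f i x * f j x = if i = j then 1 else 0)
    (u v : ι → ℝ) :
    ∫ x in a..b, (∑ i ∈ s, u i * f i x) * (∑ j ∈ s, v j * f j x) = ∑ i ∈ s, u i * v i := by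
  have hcont : ∀ i j, Continuous fun x => u i * v j * (f i x * f j x) := fun i j =>
    continuous_const.mul ((hf i).mul (hf j))
  have hexpand : ∀ x, (∑ i ∈ s, u i * f i x) * (∑ j ∈ s, v j * f j x) =
      ∑ i ∈ s, ∑ j ∈ s, u i * v j * (f i x * f j x) := fun x => by
    simp_rw [sum_mul_sum, mul_mul_mul_comm]
  simp_rw [hexpand]
  rw [intervalIntegral.integral_finsetSum fun i _ =>
    (continuous_finsetSum s fun j _ => hcont i j).intervalIntegrable a b]
  refine sum_congr rfl fun i hi => ?_
  rw [intervalIntegral.integral_finsetSum fun j _ => (hcont i j).intervalIntegrable a b]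
  simp_rw [intervalIntegral.integral_const_mul]
  rw [sum_congr rfl fun j hj => by rw [horth i hi j hj]]
  simp [hi]

section Series

variable {ι : Type*} (s : Finset ι)

noncomputable def sinSeries (c ω : ι → ℝ) (t : ℝ) : ℝ := ∑ i ∈ s, c i * sin (ω i * t)

noncomputable def cosSeries (c ω : ι → ℝ) (t : ℝ) : ℝ := ∑ i ∈ s, c i * cos (ω i * t)

theorem hasDerivAt_sinSeries (c ω : ι → ℝ) (t : ℝ) :
    HasDerivAt (sinSeries s c ω) (cosSeries s (fun i => c i * ω i) ω t) t := by
  unfold sinSeries cosSeries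
  refine HasDerivAt.fun_sum fun i _ => ?_
  exact (((hasDerivAt_id t).const_mul (ω i)).sin.const_mul (c i)).congr_deriv
    (by simp only [id, mul_one]; ring)

theorem hasDerivAt_cosSeries (c ω : ι → ℝ) (t : ℝ) :
    HasDerivAt (cosSeries s c ω) (-sinSeries s (fun i => c i * ω i) ω t) t := by
  unfold sinSeries cosSeries
  rw [← sum_neg_distrib]
  refine HasDerivAt.fun_sum fun i _ => ?_
  exact (((hasDerivAt_id t).const_mul (ω i)).cos.const_mul (c i)).congr_deriv
    (by simp only [id, mul_one]; ring)

variable [DecidableEq ι] {n : ι → ℕ}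

theorem integral_sinSeries_mul_sinSeries (hn : Set.InjOn n s) (hn0 : ∀ i ∈ s, n i ≠ 0)
    (u v : ι → ℝ) :
    ∫ t in (-1 : ℝ)..1, sinSeries s u (fun i => n i * π) t * sinSeries s v (fun i => n i * π) t =
      ∑ i ∈ s, u i * v i :=
  integral_sum_mul_sum_of_orthonormal s (fun i => by fun_prop) (fun i hi j hj => by
    simp only [integral_sin_mul_sin_nat_mul_pi
      (show n i + n j ≠ 0 by have := hn0 i hi; omega), hn.eq_iff hi hj]) u v

theorem integral_cosSeries_mul_cosSeries (hn : Set.InjOn n s) (hn0 : ∀ i ∈ s, n i ≠ 0)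
    (u v : ι → ℝ) :
    ∫ t in (-1 : ℝ)..1, cosSeries s u (fun i => n i * π) t * cosSeries s v (fun i => n i * π) t =
      ∑ i ∈ s, u i * v i :=
  integral_sum_mul_sum_of_orthonormal s (fun i => by fun_prop) (fun i hi j hj => by
    simp only [integral_cos_mul_cos_nat_mul_pi
      (show n i + n j ≠ 0 by have := hn0 i hi; omega), hn.eq_iff hi hj]) u v

theorem levyArea_sinSeries_cosSeries (hn : Set.InjOn n s) (hn0 : ∀ i ∈ s, n i ≠ 0)
    (c : ι → ℝ) :
    (∫ t in (-1 : ℝ)..1, sinSeries s c (fun i => n i * π) t *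
        deriv (cosSeries s c (fun i => n i * π)) t) -
      (∫ t in (-1 : ℝ)..1, cosSeries s c (fun i => n i * π) t *
        deriv (sinSeries s c (fun i => n i * π)) t) =
      -(2 * π) * ∑ i ∈ s, c i ^ 2 * n i := by
  simp_rw [(hasDerivAt_cosSeries s _ _ _).deriv, (hasDerivAt_sinSeries s _ _ _).deriv, mul_neg,
    intervalIntegral.integral_neg, integral_sinSeries_mul_sinSeries s hn hn0,
    integral_cosSeries_mul_cosSeries s hn hn0, mul_sum, ← sum_neg_distrib, ← sum_sub_distrib]
  exact sum_congr rfl fun i _ => by ring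

end Series

theorem tendsto_sum_range_atTop_of_one_le {f : ℕ → ℝ} (hf : ∀ k, 1 ≤ f k) :
    Tendsto (fun m => ∑ k ∈ range m, f k) atTop atTop :=
  tendsto_atTop_mono (fun m => by simpa using sum_le_sum fun k (_ : k ∈ range m) => hf k)
    tendsto_natCast_atTop_atTop

theorem levyArea_truncated_lacunary_general (α : ℝ)
    (X1 X2 : ℕ → ℝ → ℝ)
    (hX1 : ∀ m t, X1 m t = ∑ k ∈ Finset.range m, 2 ^ (-α * (k + 1)) * Real.sin (2 ^ (k + 1) * π * t))
    (hX2 : ∀ m t, X2 m t = ∑ k ∈ Finset.range m, 2 ^ (-α * (k + 1)) * Real.cos (2 ^ (k + 1) * π * t)) :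
    (∀ m : ℕ,
      (∫ s in (-1 : ℝ)..1, X1 m s * deriv (X2 m) s) -
        (∫ s in (-1 : ℝ)..1, X2 m s * deriv (X1 m) s) =
      -(2 * π) * ∑ k ∈ Finset.range m, 2 ^ ((1 - 2 * α) * (k + 1))) ∧
    (α ≤ 1 / 2 →
      Tendsto (fun m : ℕ =>
          (∫ s in (-1 : ℝ)..1, X1 m s * deriv (X2 m) s) -
            (∫ s in (-1 : ℝ)..1, X2 m s * deriv (X1 m) s))
        atTop atBot) := by
  set c : ℕ → ℝ := fun k => 2 ^ (-α * (k + 1))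
  set n : ℕ → ℕ := fun k => 2 ^ (k + 1)
  have hn : Function.Injective n := (Nat.pow_right_injective le_rfl).comp (add_left_injective 1)
  have hX1' : ∀ m, X1 m = sinSeries (range m) c (fun k => n k * π) := fun m =>
    funext fun t => by simp [hX1, sinSeries, c, n]
  have hX2' : ∀ m, X2 m = cosSeries (range m) c (fun k => n k * π) := fun m =>
    funext fun t => by simp [hX2, cosSeries, c, n]
  have hterm : ∀ k : ℕ, c k ^ 2 * n k = (2 : ℝ) ^ ((1 - 2 * α) * (k + 1)) := fun k => by
    rw [← rpow_mul_natCast zero_le_two, Nat.cast_pow, Nat.cast_ofNat, ← rpow_natCast,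
      ← rpow_add zero_lt_two]
    push_cast
    ring_nf
  have area : ∀ m : ℕ,
      (∫ s in (-1 : ℝ)..1, X1 m s * deriv (X2 m) s) -
        (∫ s in (-1 : ℝ)..1, X2 m s * deriv (X1 m) s) =
      -(2 * π) * ∑ k ∈ Finset.range m, 2 ^ ((1 - 2 * α) * (k + 1)) := fun m => by
    rw [hX1', hX2', levyArea_sinSeries_cosSeries _ hn.injOn (fun k _ => by positivity)]
    simp_rw [hterm]
  refine ⟨area, fun hα => ?_⟩
  simp_rw [area]
  exact (tendsto_const_mul_atBot_of_neg (by linarith [pi_pos])).2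
    (tendsto_sum_range_atTop_of_one_le fun k => one_le_rpow one_le_two (by nlinarith))

/-- the Lévy area of the truncated lacunary series is
`-2π ∑_{k=1}^m 2^{(1-2α)k}`, which diverges to `-∞` as `m → ∞` when `α ≤ 1/2`. -/
theorem levyArea_truncated_lacunary (α : ℝ) (hα : α ∈ Set.Ioo (0 : ℝ) 1)
    (X1 X2 : ℕ → ℝ → ℝ)
    (hX1 : ∀ m t, X1 m t = ∑ k ∈ Finset.range m, 2 ^ (-α * (k + 1)) * Real.sin (2 ^ (k + 1) * π * t))
    (hX2 : ∀ m t, X2 m t = ∑ k ∈ Finset.range m, 2 ^ (-α * (k + 1)) * Real.cos (2 ^ (k + 1) * π * t)) :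
    (∀ m : ℕ,
      (∫ s in (-1 : ℝ)..1, X1 m s * deriv (X2 m) s) -
        (∫ s in (-1 : ℝ)..1, X2 m s * deriv (X1 m) s) =
      -(2 * π) * ∑ k ∈ Finset.range m, 2 ^ ((1 - 2 * α) * (k + 1))) ∧
    (α ≤ 1 / 2 →
      Tendsto (fun m : ℕ =>
          (∫ s in (-1 : ℝ)..1, X1 m s * deriv (X2 m) s) -
            (∫ s in (-1 : ℝ)..1, X2 m s * deriv (X1 m) s))
        atTop atBot) :=
  levyArea_truncated_lacunary_general α X1 X2 hX1 hX2
end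

section
/- Let p ≥ 1, (π_n) an increasing sequence of partitions of [0,T] with mesh tending to 0, X ∈ V^p([0,T], R^d) having quadratic variation along (π_n) in the sense of Föllmer, and Y ∈ C_X^q. Then the quadratic covariation [Y,X]_T := lim_{n→∞} Σ_{[s,t]∈π_n} ⟨X_t−X_s, Y_t−Y_s⟩ exists and is given by [Y,X]_T = Σ_{1≤i,j≤d} ∫_0^T Y'_t(i,j) d[X^i,X^j]_t, where the last integral is the Riemann–Stieltjes integral against the continuous quadratic covariation functions t ↦ [X^i,X^j]_t. -/
open Finset Filter Topology

/-!
Write `ΔX = X_t − X_s` on an interval `[s,t]` of `π_n`. Then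
`⟨ΔX, ΔY⟩ = Σ_{i,j} Y'_s(i,j) ΔX^i ΔX^j + ⟨ΔX, R_{s,t}⟩` with `R` the controlled remainder.
The remainder part is `o(1)`: by weighted AM–GM, `|ΔX| |R| ≤ (|ΔX|^p / p + (1 - 1/p) |R|^r) ·
(max |R|)^e` with `e = 1 - r (1 - 1/p) > 0`, and `max |R| → 0` by uniform continuity.
After polarization, the main part reduces to weighted sums `Σ h(s) (Δg)²` along `π_n`. For a
coarser `π_m`, such a sum is within `ε · Σ (Δg)²` of the Stieltjes sum of `h` along `π_m`
against the discrete quadratic variation of `g` along `π_n`, once the mesh of `π_m` is finer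
than the modulus of continuity of `h` at `ε`. Letting first `n → ∞` and then `m → ∞` shows
that both the weighted sums and the Stieltjes sums against `[g]` converge, to the same limit.
-/

open Set

lemma Fin.sum_succ_sub_castSucc {M : Type*} [AddCommGroup M] {n : ℕ} (f : Fin (n + 1) → M) :
    ∑ i : Fin n, (f i.succ - f i.castSucc) = f (Fin.last n) - f 0 := by
  induction n with
  | zero => simp
  | succ n ih =>
    rw [Fin.sum_univ_castSucc, ← Fin.succ_last]
    simp_rw [Fin.succ_castSucc]
    rw [ih fun i => f i.castSucc]
    simp

namespace GridPartition

variable {a b : ℝ} (π : GridPartition a b)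

lemma t_mem (k : Fin (π.n + 1)) : π.t k ∈ Icc a b :=
  ⟨π.first.symm.le.trans (π.mono (Fin.zero_le k)), (π.mono (Fin.le_last k)).trans π.last.le⟩

lemma left_le_right (π : GridPartition a b) : a ≤ b := (π.t_mem 0).1.trans (π.t_mem 0).2

lemma t_castSucc_le_succ (i : Fin π.n) : π.t i.castSucc ≤ π.t i.succ :=
  π.mono (Fin.castSucc_le_succ i)

lemma t_succ_sub_castSucc_le_mesh (i : Fin π.n) : π.t i.succ - π.t i.castSucc ≤ π.mesh :=
  le_ciSup (f := fun i : Fin π.n => π.t i.succ - π.t i.castSucc) (finite_range _).bddAbove i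

lemma le_or_ge_of_mem_range (i : Fin π.n) {x : ℝ} (hx : x ∈ range π.t) :
    x ≤ π.t i.castSucc ∨ π.t i.succ ≤ x := by
  obtain ⟨k, rfl⟩ := hx
  rcases le_or_gt k i.castSucc with hk | hk
  · exact Or.inl (π.mono hk)
  · exact Or.inr (π.mono (Fin.castSucc_lt_iff_succ_le.mp hk))

section rsum

variable {M : Type*} [AddCommGroup M]

lemma rsum_sub (e : ℝ → M) : π.rsum (fun s t => e t - e s) = e b - e a := by
  rw [rsum, Fin.sum_succ_sub_castSucc fun k => e (π.t k), π.last, π.first]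

lemma rsum_add (F G : ℝ → ℝ → M) :
    π.rsum (fun s t => F s t + G s t) = π.rsum F + π.rsum G :=
  sum_add_distrib

lemma rsum_finset_sum {ι : Type*} (u : Finset ι) (F : ι → ℝ → ℝ → M) :
    π.rsum (fun s t => ∑ i ∈ u, F i s t) = ∑ i ∈ u, π.rsum (F i) :=
  sum_comm

end rsum

def stieltjesSum (h e : ℝ → ℝ) : ℝ := π.rsum fun s t => h s * (e t - e s)

/-- The sums whose limits `HasQV` prescribes. -/
def qvSum (g : ℝ → ℝ) (u : ℝ) : ℝ :=
  ∑ i : Fin π.n, (g (min (π.t i.succ) u) - g (min (π.t i.castSucc) u)) ^ 2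

noncomputable def maxIncr {E : Type*} [SeminormedAddCommGroup E] (R : ℝ → ℝ → E) : ℝ :=
  ⨆ i : Fin π.n, ‖R (π.t i.castSucc) (π.t i.succ)‖

lemma qvSum_right (g : ℝ → ℝ) : π.qvSum g b = π.rsum fun s t => (g t - g s) ^ 2 :=
  sum_congr rfl fun i _ => by rw [min_eq_left (π.t_mem _).2, min_eq_left (π.t_mem _).2]

lemma stieltjesSum_finset_sum {ι : Type*} (u : Finset ι) (h : ℝ → ℝ) (e : ι → ℝ → ℝ) :
    π.stieltjesSum h (fun v => ∑ i ∈ u, e i v) = ∑ i ∈ u, π.stieltjesSum h (e i) := by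
  simp only [stieltjesSum, ← sum_sub_distrib, mul_sum]
  exact π.rsum_finset_sum u _

lemma tendsto_stieltjesSum {ι : Type*} {l : Filter ι} (h : ℝ → ℝ) {e : ι → ℝ → ℝ} {E : ℝ → ℝ}
    (he : ∀ k, Tendsto (fun n => e n (π.t k)) l (𝓝 (E (π.t k)))) :
    Tendsto (fun n => π.stieltjesSum h (e n)) l (𝓝 (π.stieltjesSum h E)) := by
  unfold stieltjesSum rsum
  exact tendsto_finsetSum _ fun (j : Fin π.n) _ => ((he j.succ).sub (he j.castSucc)).const_mul _

lemma abs_mul_sub_stieltjesSum_le {h e : ℝ → ℝ} {x ε : ℝ}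
    (he : ∀ j : Fin π.n, e (π.t j.castSucc) ≤ e (π.t j.succ))
    (hjump : ∀ j : Fin π.n, e (π.t j.castSucc) ≠ e (π.t j.succ) →
      dist (h x) (h (π.t j.castSucc)) ≤ ε) :
    |h x * (e b - e a) - π.stieltjesSum h e| ≤ ε * (e b - e a) := by
  have hsplit : h x * (e b - e a) - π.stieltjesSum h e =
      π.rsum fun s t => (h x - h s) * (e t - e s) := by
    rw [← π.rsum_sub e, stieltjesSum, rsum, rsum, rsum, mul_sum, ← sum_sub_distrib]
    exact sum_congr rfl fun j _ => by ring
  rw [hsplit, ← π.rsum_sub e, rsum, rsum, mul_sum]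
  refine (abs_sum_le_sum_abs _ _).trans (sum_le_sum fun j _ => ?_)
  rw [abs_mul, abs_of_nonneg (sub_nonneg.2 (he j))]
  rcases eq_or_ne (e (π.t j.castSucc)) (e (π.t j.succ)) with hj | hj
  · simp [hj]
  · exact mul_le_mul_of_nonneg_right (Real.dist_eq _ _ ▸ hjump j hj) (sub_nonneg.2 (he j))

variable {δ ε : ℝ} {g h : ℝ → ℝ}

/-- Since no point of `π` lies strictly inside `[s,u]`, the integrator jumps, by `(g u - g s)²`,
on the single interval of `π` containing `[s,u]`. -/
lemma abs_mul_sq_sub_stieltjesSum_le {s u : ℝ} (hs : a ≤ s) (hsu : s ≤ u) (hu : u ≤ b)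
    (hsep : ∀ x ∈ range π.t, x ≤ s ∨ u ≤ x) (hmesh : π.mesh ≤ δ)
    (hh : ∀ x ∈ Icc a b, ∀ y ∈ Icc a b, dist x y ≤ δ → dist (h x) (h y) ≤ ε) :
    |h s * (g u - g s) ^ 2 - π.stieltjesSum h (fun v => (g (min u v) - g (min s v)) ^ 2)| ≤
      ε * (g u - g s) ^ 2 := by
  set e : ℝ → ℝ := fun v => (g (min u v) - g (min s v)) ^ 2
  have he : ∀ k, e (π.t k) = if u ≤ π.t k then (g u - g s) ^ 2 else 0 := by
    intro k
    by_cases hk : u ≤ π.t k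
    · simp only [e, hk, if_true, min_eq_left hk, min_eq_left (hsu.trans hk)]
    · have hks : π.t k ≤ s := (hsep _ ⟨k, rfl⟩).resolve_right hk
      simp only [e, hk, if_false, min_eq_right hks, min_eq_right (hks.trans hsu), sub_self,
        zero_pow two_ne_zero]
  have hea : e a = 0 := by simp [e, min_eq_right hs, min_eq_right (hs.trans hsu)]
  have heb : e b = (g u - g s) ^ 2 := by simp [e, min_eq_left hu, min_eq_left (hsu.trans hu)]
  have key := π.abs_mul_sub_stieltjesSum_le (h := h) (e := e) (x := s) (ε := ε) (fun j => ?_)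
    (fun j hj => ?_)
  · rwa [hea, heb, sub_zero] at key
  · have hj := π.t_castSucc_le_succ j
    rw [he, he]
    split_ifs with h₁ h₂ <;> first | exact le_rfl | positivity | exact absurd (h₁.trans hj) h₂
  · rw [he, he] at hj
    have h₁ : ¬ u ≤ π.t j.castSucc := fun h₁ => hj (by
      rw [if_pos h₁, if_pos (h₁.trans (π.t_castSucc_le_succ j))])
    have h₂ : u ≤ π.t j.succ := by
      by_contra h₂
      exact hj (by rw [if_neg h₁, if_neg h₂])
    have h₃ : π.t j.castSucc ≤ s := (hsep _ ⟨_, rfl⟩).resolve_right h₁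
    refine hh s ⟨hs, hsu.trans hu⟩ _ (π.t_mem _) ?_
    rw [Real.dist_eq, abs_of_nonneg (sub_nonneg.2 h₃)]
    linarith [π.t_succ_sub_castSucc_le_mesh j]

lemma abs_rsum_sub_stieltjesSum_qvSum_le (ρ : GridPartition a b) (href : range π.t ⊆ range ρ.t)
    (hmesh : π.mesh ≤ δ)
    (hh : ∀ x ∈ Icc a b, ∀ y ∈ Icc a b, dist x y ≤ δ → dist (h x) (h y) ≤ ε) :
    |(ρ.rsum fun s t => h s * (g t - g s) ^ 2) - π.stieltjesSum h (ρ.qvSum g)| ≤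
      ε * ρ.rsum fun s t => (g t - g s) ^ 2 := by
  rw [show ρ.qvSum g = fun v => ∑ i : Fin ρ.n,
      (g (min (ρ.t i.succ) v) - g (min (ρ.t i.castSucc) v)) ^ 2 from rfl,
    stieltjesSum_finset_sum, rsum, rsum, mul_sum, ← sum_sub_distrib]
  refine (abs_sum_le_sum_abs _ _).trans (sum_le_sum fun i _ => ?_)
  exact π.abs_mul_sq_sub_stieltjesSum_le (ρ.t_mem _).1 (ρ.t_castSucc_le_succ i) (ρ.t_mem _).2
    (fun x hx => ρ.le_or_ge_of_mem_range i (href hx)) hmesh hh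

lemma norm_le_maxIncr {E : Type*} [SeminormedAddCommGroup E] (R : ℝ → ℝ → E) (i : Fin π.n) :
    ‖R (π.t i.castSucc) (π.t i.succ)‖ ≤ π.maxIncr R :=
  le_ciSup (f := fun i : Fin π.n => ‖R (π.t i.castSucc) (π.t i.succ)‖)
    (finite_range _).bddAbove i

lemma maxIncr_nonneg {E : Type*} [SeminormedAddCommGroup E] (R : ℝ → ℝ → E) :
    0 ≤ π.maxIncr R :=
  Real.iSup_nonneg fun _ => norm_nonneg _

end GridPartition

open GridPartition

theorem exists_tendsto_of_forall_dist_le {α : Type*} [PseudoMetricSpace α] [CompleteSpace α]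
    {W V : ℕ → α} {Φ : ℕ → ℕ → α} (hΦ : ∀ m, Tendsto (Φ m) atTop (𝓝 (V m)))
    (hWΦ : ∀ ε > 0, ∃ N, ∀ m ≥ N, ∀ n ≥ m, dist (W n) (Φ m n) ≤ ε) :
    ∃ L, Tendsto V atTop (𝓝 L) ∧ Tendsto W atTop (𝓝 L) := by
  have hW : CauchySeq W := by
    refine Metric.cauchySeq_iff.2 fun ε hε => ?_
    obtain ⟨N, hN⟩ := hWΦ (ε / 3) (by positivity)
    obtain ⟨N', hN'⟩ := Metric.cauchySeq_iff.1 (hΦ N).cauchySeq (ε / 3) (by positivity)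
    refine ⟨max N N', fun n hn n' hn' => ?_⟩
    have h₁ := hN N le_rfl n (le_of_max_le_left hn)
    have h₂ := hN' n (le_of_max_le_right hn) n' (le_of_max_le_right hn')
    have h₃ := hN N le_rfl n' (le_of_max_le_left hn')
    calc dist (W n) (W n') ≤ dist (W n) (Φ N n) + dist (Φ N n) (Φ N n') + dist (Φ N n') (W n') :=
          dist_triangle4 _ _ _ _
      _ < ε := by rw [dist_comm (Φ N n')] at *; linarith
  obtain ⟨L, hL⟩ := cauchySeq_tendsto_of_complete hW
  refine ⟨L, Metric.tendsto_atTop.2 fun ε hε => ?_, hL⟩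
  obtain ⟨N, hN⟩ := hWΦ (ε / 2) (by positivity)
  refine ⟨N, fun m hm => (le_of_tendsto ((hΦ m).dist hL) ?_).trans_lt (half_lt_self hε)⟩
  exact eventually_atTop.2 ⟨m, fun n hn => (dist_comm _ _).trans_le (hN m hm n hn)⟩

lemma IncreasingSeq.range_subset {T : ℝ} {π : ℕ → GridPartition 0 T} (hπ : IncreasingSeq π)
    {m n : ℕ} (hmn : m ≤ n) : range (π m).t ⊆ range (π n).t :=
  monotone_nat_of_le_succ (f := fun n => range (π n).t) hπ.1 hmn

theorem HasQV.exists_tendsto_stieltjesSum {T : ℝ} {π : ℕ → GridPartition 0 T}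
    (hπ : IncreasingSeq π) {g Q h : ℝ → ℝ} (hQ : HasQV π g Q) (hh : ContinuousOn h (Icc 0 T)) :
    ∃ L, Tendsto (fun n => (π n).stieltjesSum h Q) atTop (𝓝 L) ∧
      Tendsto (fun n => (π n).rsum fun s t => h s * (g t - g s) ^ 2) atTop (𝓝 L) := by
  refine exists_tendsto_of_forall_dist_le (Φ := fun m n => (π m).stieltjesSum h ((π n).qvSum g))
    (fun m => (π m).tendsto_stieltjesSum h fun k => hQ.2 _ ((π m).t_mem k)) fun ε hε => ?_
  obtain ⟨C, hC0, hC⟩ : ∃ C > 0, ∀ n, (π n).rsum (fun s t => (g t - g s) ^ 2) ≤ C := by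
    obtain ⟨C, hC⟩ := (hQ.2 T ⟨(π 0).left_le_right, le_rfl⟩).bddAbove_range
    exact ⟨max C 1, by positivity, fun n =>
      ((π n).qvSum_right g).symm.le.trans ((hC ⟨n, rfl⟩).trans (le_max_left _ _))⟩
  obtain ⟨δ, hδ, hhδ⟩ := Metric.uniformContinuousOn_iff_le.1
    (isCompact_Icc.uniformContinuousOn_of_continuous hh) (ε / C) (by positivity)
  obtain ⟨N, hN⟩ := eventually_atTop.1 (hπ.2.eventually (gt_mem_nhds hδ))
  refine ⟨N, fun m hm n hmn => ?_⟩
  calc dist _ _ ≤ ε / C * (π n).rsum fun s t => (g t - g s) ^ 2 :=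
        (π m).abs_rsum_sub_stieltjesSum_qvSum_le (π n) (hπ.range_subset hmn) (hN m hm).le hhδ
    _ ≤ ε / C * C := by gcongr; exact hC n
    _ = ε := div_mul_cancel₀ _ hC0.ne'

theorem HasQV.exists_tendsto_stieltjesSum_covariation {T : ℝ} {π : ℕ → GridPartition 0 T}
    (hπ : IncreasingSeq π) {f g Qf Qg Qfg h : ℝ → ℝ} (hf : HasQV π f Qf) (hg : HasQV π g Qg)
    (hfg : HasQV π (fun t => f t + g t) Qfg) (hh : ContinuousOn h (Icc 0 T)) :
    ∃ L, Tendsto (fun n => (π n).stieltjesSum h fun t => (Qfg t - Qf t - Qg t) / 2) atTop (𝓝 L) ∧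
      Tendsto (fun n => (π n).rsum fun s t => h s * ((f t - f s) * (g t - g s))) atTop (𝓝 L) := by
  obtain ⟨L₁, hS₁, hW₁⟩ := hfg.exists_tendsto_stieltjesSum hπ hh
  obtain ⟨L₂, hS₂, hW₂⟩ := hf.exists_tendsto_stieltjesSum hπ hh
  obtain ⟨L₃, hS₃, hW₃⟩ := hg.exists_tendsto_stieltjesSum hπ hh
  refine ⟨(L₁ - L₂ - L₃) / 2, ?_, ?_⟩
  · convert ((hS₁.sub hS₂).sub hS₃).div_const 2 using 2 with n
    simp only [stieltjesSum, rsum, ← sum_sub_distrib, sum_div]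
    exact sum_congr rfl fun _ _ => by ring
  · convert ((hW₁.sub hW₂).sub hW₃).div_const 2 using 2 with n
    simp only [rsum, ← sum_sub_distrib, sum_div]
    exact sum_congr rfl fun _ _ => by ring

theorem tendsto_maxIncr_of_continuousOn {E : Type*} [SeminormedAddCommGroup E] {a b : ℝ}
    {π : ℕ → GridPartition a b} (hmesh : Tendsto (fun n => (π n).mesh) atTop (𝓝 0))
    {R : ℝ → ℝ → E} (hR : ContinuousOn (Function.uncurry R) (Icc a b ×ˢ Icc a b))
    (hdiag : ∀ s ∈ Icc a b, R s s = 0) :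
    Tendsto (fun n => (π n).maxIncr R) atTop (𝓝 0) := by
  refine tendsto_order.2 ⟨fun c hc => Eventually.of_forall fun n =>
    hc.trans_le ((π n).maxIncr_nonneg R), fun ε hε => ?_⟩
  obtain ⟨δ, hδ, hRδ⟩ := Metric.uniformContinuousOn_iff_le.1
    ((isCompact_Icc.prod isCompact_Icc).uniformContinuousOn_of_continuous hR) (ε / 2)
    (half_pos hε)
  filter_upwards [hmesh.eventually (gt_mem_nhds hδ)] with n hn
  refine (Real.iSup_le (fun i => ?_) (half_pos hε).le).trans_lt (half_lt_self hε)
  have hs := (π n).t_mem i.castSucc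
  have ht := (π n).t_mem i.succ
  have hclose : dist ((π n).t i.castSucc, (π n).t i.succ)
      ((π n).t i.castSucc, (π n).t i.castSucc) ≤ δ := by
    rw [Prod.dist_eq, dist_self, Real.dist_eq,
      abs_of_nonneg (sub_nonneg.2 ((π n).t_castSucc_le_succ i))]
    exact max_le hδ.le ((π n).t_succ_sub_castSucc_le_mesh i |>.trans hn.le)
  simpa [hdiag _ hs] using hRδ _ ⟨hs, ht⟩ _ ⟨hs, hs⟩ hclose

/-- Weighted AM–GM with weights `1/p` and `1 - 1/p`, keeping the surplus power of `y`. -/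
lemma Real.mul_le_inv_mul_rpow_add_mul_rpow {x y B p r : ℝ} (hx : 0 ≤ x) (hy : 0 ≤ y)
    (hyB : y ≤ B) (hp : 1 ≤ p) (he : 0 ≤ 1 - r * (1 - p⁻¹)) :
    x * y ≤ (p⁻¹ * x ^ p + (1 - p⁻¹) * y ^ r) * B ^ (1 - r * (1 - p⁻¹)) := by
  have hp₀ : 0 < p := one_pos.trans_le hp
  have hθ : 0 ≤ 1 - p⁻¹ := sub_nonneg.2 (inv_le_one_of_one_le₀ hp)
  have hx' : x = (x ^ p) ^ p⁻¹ := (Real.rpow_rpow_inv hx hp₀.ne').symm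
  have hy' : y = (y ^ r) ^ (1 - p⁻¹) * y ^ (1 - r * (1 - p⁻¹)) := by
    rw [← Real.rpow_mul hy, ← Real.rpow_add' hy (by ring_nf; exact one_ne_zero)]
    ring_nf
    exact (Real.rpow_one y).symm
  calc x * y = ((x ^ p) ^ p⁻¹ * (y ^ r) ^ (1 - p⁻¹)) * y ^ (1 - r * (1 - p⁻¹)) := by
        nth_rewrite 1 [hx', hy']; ring
    _ ≤ (p⁻¹ * x ^ p + (1 - p⁻¹) * y ^ r) * B ^ (1 - r * (1 - p⁻¹)) := by
        gcongr
        exact Real.geom_mean_le_arith_mean2_weighted (inv_nonneg.2 hp₀.le) hθ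
          (by positivity) (by positivity) (by ring)

theorem tendsto_rsum_norm_mul_norm {E F : Type*} [SeminormedAddCommGroup E]
    [SeminormedAddCommGroup F] {a b p r : ℝ} {π : ℕ → GridPartition a b}
    {A : ℝ → ℝ → E} {B : ℝ → ℝ → F} (hp : 1 ≤ p) (hr : 0 < r) (hpr : 1 < p⁻¹ + r⁻¹)
    (hA : FiniteRVar2 p a b A) (hB : FiniteRVar2 r a b B)
    (hBmax : Tendsto (fun n => (π n).maxIncr B) atTop (𝓝 0)) :
    Tendsto (fun n => (π n).rsum fun s t => ‖A s t‖ * ‖B s t‖) atTop (𝓝 0) := by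
  obtain ⟨MA, hMA⟩ := hA
  obtain ⟨MB, hMB⟩ := hB
  have hθ : 0 ≤ 1 - p⁻¹ := sub_nonneg.2 (inv_le_one_of_one_le₀ hp)
  set e := 1 - r * (1 - p⁻¹)
  have he : 0 < e := by
    have : r * (1 - p⁻¹) < r * r⁻¹ := by gcongr; linarith
    rw [mul_inv_cancel₀ hr.ne'] at this
    linarith
  have hbound : ∀ n, ((π n).rsum fun s t => ‖A s t‖ * ‖B s t‖) ≤
      (p⁻¹ * MA + (1 - p⁻¹) * MB) * (π n).maxIncr B ^ e := by
    intro n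
    calc ((π n).rsum fun s t => ‖A s t‖ * ‖B s t‖)
        ≤ ∑ i : Fin (π n).n, (p⁻¹ * ‖A ((π n).t i.castSucc) ((π n).t i.succ)‖ ^ p +
            (1 - p⁻¹) * ‖B ((π n).t i.castSucc) ((π n).t i.succ)‖ ^ r) *
              (π n).maxIncr B ^ e :=
          sum_le_sum fun i _ => Real.mul_le_inv_mul_rpow_add_mul_rpow (norm_nonneg _)
            (norm_nonneg _) ((π n).norm_le_maxIncr B i) hp he.le
      _ = (p⁻¹ * ∑ i : Fin (π n).n, ‖A ((π n).t i.castSucc) ((π n).t i.succ)‖ ^ p +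
            (1 - p⁻¹) * ∑ i : Fin (π n).n, ‖B ((π n).t i.castSucc) ((π n).t i.succ)‖ ^ r) *
              (π n).maxIncr B ^ e := by
          rw [← sum_mul, sum_add_distrib, ← mul_sum, ← mul_sum]
      _ ≤ _ := by
          have := (π n).maxIncr_nonneg B
          gcongr
          exacts [hMA (π n), hMB (π n)]
  have hlim := (hBmax.rpow_const (Or.inr he.le)).const_mul (p⁻¹ * MA + (1 - p⁻¹) * MB)
  rw [Real.zero_rpow he.ne', mul_zero] at hlim
  exact squeeze_zero (fun n => sum_nonneg fun i _ => by positivity) hbound hlim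

lemma abs_dot_le {d : ℕ} (x y : Fin d → ℝ) : |dot x y| ≤ d * (‖x‖ * ‖y‖) := by
  calc |dot x y| ≤ ∑ i, |x i| * |y i| := by
        simpa only [dot, abs_mul] using abs_sum_le_sum_abs (fun i => x i * y i) univ
    _ ≤ ∑ _i : Fin d, ‖x‖ * ‖y‖ := sum_le_sum fun i _ =>
        mul_le_mul (norm_le_pi_norm x i) (norm_le_pi_norm y i) (abs_nonneg _) (norm_nonneg _)
    _ = d * (‖x‖ * ‖y‖) := by simp

lemma FinitePVar.finiteRVar2 {E : Type*} [SeminormedAddCommGroup E] {p a b : ℝ} {X : ℝ → E}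
    (hX : FinitePVar p a b X) : FiniteRVar2 p a b fun s t => X t - X s :=
  hX

theorem tendsto_rsum_dot {d : ℕ} {a b p r : ℝ} {π : ℕ → GridPartition a b}
    {A B : ℝ → ℝ → Fin d → ℝ} (hp : 1 ≤ p) (hr : 0 < r) (hpr : 1 < p⁻¹ + r⁻¹)
    (hA : FiniteRVar2 p a b A) (hB : FiniteRVar2 r a b B)
    (hBmax : Tendsto (fun n => (π n).maxIncr B) atTop (𝓝 0)) :
    Tendsto (fun n => (π n).rsum fun s t => dot (A s t) (B s t)) atTop (𝓝 0) := by
  have hlim := (tendsto_rsum_norm_mul_norm hp hr hpr hA hB hBmax).const_mul (d : ℝ)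
  rw [mul_zero] at hlim
  refine squeeze_zero_norm (fun n => ?_) hlim
  rw [Real.norm_eq_abs, rsum, rsum, mul_sum]
  exact (abs_sum_le_sum_abs _ _).trans (sum_le_sum fun i _ => abs_dot_le _ _)

lemma mulVec'_zero {d : ℕ} (M : Fin d → Fin d → ℝ) : mulVec' M 0 = 0 := by
  funext i
  simp [mulVec']

lemma continuous_mulVec' {d : ℕ} :
    Continuous fun z : (Fin d → Fin d → ℝ) × (Fin d → ℝ) => mulVec' z.1 z.2 := by
  unfold mulVec'
  fun_prop

lemma continuousOn_uncurry_remainder {d : ℕ} {a b : ℝ} {X Y : ℝ → Fin d → ℝ}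
    {Y' : ℝ → Fin d → Fin d → ℝ} (hX : ContinuousOn X (Icc a b))
    (hY : ContinuousOn Y (Icc a b)) (hY' : ContinuousOn Y' (Icc a b)) :
    ContinuousOn (Function.uncurry fun s t => Y t - Y s - mulVec' (Y' s) (X t - X s))
      (Icc a b ×ˢ Icc a b) := by
  have hfst {E : Type}  [TopologicalSpace E] {f : ℝ → E} (hf : ContinuousOn f (Icc a b)) :
      ContinuousOn (fun z : ℝ × ℝ => f z.1) (Icc a b ×ˢ Icc a b) :=
    hf.comp continuousOn_fst fun _ hz => hz.1
  have hsnd {E : Type}  [TopologicalSpace E] {f : ℝ → E} (hf : ContinuousOn f (Icc a b)) :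
      ContinuousOn (fun z : ℝ × ℝ => f z.2) (Icc a b ×ˢ Icc a b) :=
    hf.comp continuousOn_snd fun _ hz => hz.2
  have hmul : ContinuousOn (fun z : ℝ × ℝ => mulVec' (Y' z.1) (X z.2 - X z.1))
      (Icc a b ×ˢ Icc a b) :=
    continuous_mulVec'.comp_continuousOn ((hfst hY').prodMk ((hsnd hX).sub (hfst hX)))
  exact ((hsnd hY).sub (hfst hY)).sub hmul

lemma dot_eq_sum_sum_add_dot_sub_mulVec' {d : ℕ} (M : Fin d → Fin d → ℝ) (x y : Fin d → ℝ) :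
    dot x y = ∑ i, ∑ j, M i j * (x i * x j) + dot x (y - mulVec' M x) := by
  have hM : ∑ i, ∑ j, M i j * (x i * x j) = ∑ i, x i * mulVec' M x i := by
    simp only [mulVec', mul_sum]
    exact sum_congr rfl fun i _ => sum_congr rfl fun j _ => by ring
  simp only [hM, dot, Pi.sub_apply, mul_sub, sum_sub_distrib]
  ring

lemma GridPartition.rsum_dot_eq {d : ℕ} {a b : ℝ} (π : GridPartition a b)
    (X Y : ℝ → Fin d → ℝ) (Y' : ℝ → Fin d → Fin d → ℝ) :
    π.rsum (fun s t => dot (X t - X s) (Y t - Y s)) =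
      ∑ i, ∑ j, π.rsum (fun s t => Y' s i j * ((X t i - X s i) * (X t j - X s j))) +
        π.rsum fun s t => dot (X t - X s) (Y t - Y s - mulVec' (Y' s) (X t - X s)) := by
  simp only [← π.rsum_finset_sum, ← π.rsum_add]
  exact congrArg π.rsum (funext₂ fun s _ => dot_eq_sum_sum_add_dot_sub_mulVec' (Y' s) _ _)

theorem quadratic_covariation_of_controlled_general {d : ℕ} (T p q r : ℝ)
    (hp : 1 ≤ p) (hq : 0 < q) (hexp : 2 / p + 1 / q > 1) (hr : 1 / r = 1 / p + 1 / q)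
    (π : ℕ → GridPartition 0 T) (hπ : IncreasingSeq π)
    (X Y : ℝ → Fin d → ℝ) (Y' : ℝ → Fin d → Fin d → ℝ)
    (hX : MemVp p 0 T X) (hY : MemVp p 0 T Y)
    (hctrl : Controlled q r 0 T X Y Y')
    (Q : Fin d → ℝ → ℝ) (QS : Fin d → Fin d → ℝ → ℝ)
    (hQ : ∀ i, HasQV π (fun t => X t i) (Q i))
    (hQS : ∀ i j, HasQV π (fun t => X t i + X t j) (QS i j)) :
    ∃ I : Fin d → Fin d → ℝ,
      (∀ i j : Fin d,
        Tendsto (fun n => (π n).rsum (fun s t =>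
            Y' s i j * ((QS i j t - Q i t - Q j t) / 2 -
              (QS i j s - Q i s - Q j s) / 2)))
          atTop (𝓝 (I i j))) ∧
      Tendsto (fun n => (π n).rsum (fun s t => dot (X t - X s) (Y t - Y s)))
        atTop (𝓝 (∑ i, ∑ j, I i j)) := by
  have hp₀ : 0 < p := one_pos.trans_le hp
  have hr₀ : 0 < r := by rw [← one_div_pos, hr]; positivity
  have hpr : 1 < p⁻¹ + r⁻¹ := by
    rw [← one_div r, hr]
    linarith [show 2 / p = 1 / p + 1 / p by ring, one_div p]
  have hY'ij (i j : Fin d) : ContinuousOn (fun s => Y' s i j) (Icc 0 T) :=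
    continuousOn_pi.1 (continuousOn_pi.1 hctrl.1.1 i) j
  choose I hIQ hIX using fun i j =>
    (hQ i).exists_tendsto_stieltjesSum_covariation hπ (hQ j) (hQS i j) (hY'ij i j)
  refine ⟨I, hIQ, ?_⟩
  have hRmax := tendsto_maxIncr_of_continuousOn hπ.2
    (continuousOn_uncurry_remainder hX.1 hY.1 hctrl.1.1) fun s _ => by simp [mulVec'_zero]
  have hrem := tendsto_rsum_dot hp hr₀ hpr hX.2.finiteRVar2 hctrl.2 hRmax
  have hlim := (tendsto_finsetSum univ fun i _ =>
    tendsto_finsetSum univ fun j _ => hIX i j).add hrem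
  rw [add_zero] at hlim
  exact hlim.congr fun n => ((π n).rsum_dot_eq X Y Y').symm

/-- existence of the quadratic covariation `[Y,X]_T` for a
controlled path `Y ∈ C_X^q`, and its representation as
`Σ_{i,j} ∫_0^T Y'(i,j) d[X^i,X^j]` (the Riemann–Stieltjes integrals being limits
of Riemann sums along the partition sequence). -/
theorem quadratic_covariation_of_controlled {d : ℕ} (T p q r : ℝ) (hT : 0 < T)
    (hp : 1 ≤ p) (hq : 0 < q) (hexp : 2 / p + 1 / q > 1) (hr : 1 / r = 1 / p + 1 / q)
    (π : ℕ → GridPartition 0 T) (hπ : IncreasingSeq π)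
    (X Y : ℝ → Fin d → ℝ) (Y' : ℝ → Fin d → Fin d → ℝ)
    (hX : MemVp p 0 T X) (hY : MemVp p 0 T Y)
    (hctrl : Controlled q r 0 T X Y Y')
    (Q : Fin d → ℝ → ℝ) (QS : Fin d → Fin d → ℝ → ℝ)
    (hQ : ∀ i, HasQV π (fun t => X t i) (Q i))
    (hQS : ∀ i j, HasQV π (fun t => X t i + X t j) (QS i j)) :
    ∃ I : Fin d → Fin d → ℝ,
      (∀ i j : Fin d,
        Tendsto (fun n => (π n).rsum (fun s t =>
            Y' s i j * ((QS i j t - Q i t - Q j t) / 2 -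
              (QS i j s - Q i s - Q j s) / 2)))
          atTop (𝓝 (I i j))) ∧
      Tendsto (fun n => (π n).rsum (fun s t => dot (X t - X s) (Y t - Y s)))
        atTop (𝓝 (∑ i, ∑ j, I i j)) :=
  quadratic_covariation_of_controlled_general T p q r hp hq hexp hr π hπ X Y Y' hX hY hctrl Q QS hQ
    hQS
end
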